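/- arXiv:0811.1369 — 6 statements merged into one kernel-verified Lean document; each statement's English description precedes it below -/
import Mathlib

section
/- Let α > 0 be an irrational real number and β > 2 a real number. Let v₁ = (p₁,q₁) and v₂ = (p₂,q₂) be integer vectors such that x₁ = p₁ − α·q₁ and x₂ = p₂ − α·q₂ have the same sign and 0 < |x₂| < |x₁|; set d₁ = 1/|x₁| and d₂ = 1/|x₂|. Then the sum over all pairs (a,b) of coprime positive integers of 1/|(a·p₁ + b·p₂) − α·(a·q₁ + b·q₂)|^β converges and satisfies d₁^β · S < Σ_{(a,b) coprime, a,b ≥ 1} 1/|(a·p₁ + b·p₂) − α·(a·q₁ + b·q₂)|^β < d₂^β · S, where S = Σ_{(a,b) coprime, a,b ≥ 1} 1/(a+b)^β. -/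
/-!
Since `x₁ = p₁ - α q₁` and `x₂ = p₂ - α q₂` have the same sign, for `a, b ≥ 0` the linear form
`a x₁ + b x₂` has absolute value `a |x₁| + b |x₂|`, which for `a, b ≥ 1` lies strictly between
`(a + b) |x₂|` and `(a + b) |x₁|`. Hence each term of the sum is squeezed strictly between
`d₁^β / (a + b)^β` and `d₂^β / (a + b)^β`, and the reference series converges for `β > 2` because
`(a + b)^β ≥ (a b)^(β/2)`.
-/

open Real

lemma abs_mul_add_mul_of_mul_pos {x y a b : ℝ} (hxy : 0 < x * y) (ha : 0 ≤ a) (hb : 0 ≤ b) :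
    |a * x + b * y| = a * |x| + b * |y| := by
  rw [(abs_add_eq_add_abs_iff _ _).mpr ?_, abs_mul, abs_mul, abs_of_nonneg ha, abs_of_nonneg hb]
  rcases mul_pos_iff.mp hxy with ⟨hx, hy⟩ | ⟨hx, hy⟩
  · exact .inl ⟨by positivity, by positivity⟩
  · exact .inr ⟨mul_nonpos_of_nonneg_of_nonpos ha hx.le, mul_nonpos_of_nonneg_of_nonpos hb hy.le⟩

lemma mul_rpow_half_le_add_rpow {a b : ℝ} (ha : 0 ≤ a) (hb : 0 ≤ b) {β : ℝ} (hβ : 0 ≤ β) :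
    (a * b) ^ (β / 2) ≤ (a + b) ^ β :=
  calc (a * b) ^ (β / 2) ≤ ((a + b) ^ (2 : ℝ)) ^ (β / 2) := by
        gcongr
        rw [rpow_two]
        nlinarith [four_mul_le_sq_add a b, mul_nonneg ha hb]
    _ = (a + b) ^ β := by rw [← rpow_mul (by positivity)]; ring_nf

lemma summable_one_div_add_rpow {β : ℝ} (hβ : 2 < β) {P : ℕ × ℕ → Prop}
    (hP : ∀ ab, P ab → 0 < ab.1 ∧ 0 < ab.2) :
    Summable fun ab : {ab : ℕ × ℕ // P ab} => 1 / ((ab.1.1 + ab.1.2 : ℕ) : ℝ) ^ β := by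
  have h : Summable fun n : ℕ => ((n : ℝ) ^ (β / 2))⁻¹ := summable_nat_rpow_inv.mpr (by linarith)
  refine ((h.mul_of_nonneg h (fun _ => by positivity) (fun _ => by positivity)).comp_injective
    Subtype.val_injective).of_nonneg_of_le (fun _ => by positivity) fun ⟨⟨a, b⟩, hab⟩ => ?_
  obtain ⟨ha, hb⟩ := hP _ hab
  simp only [Function.comp_apply]
  rw [← mul_inv, ← mul_rpow (by positivity) (by positivity), one_div, Nat.cast_add]
  exact inv_anti₀ (by positivity) (mul_rpow_half_le_add_rpow (by positivity) (by positivity) (by linarith))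

lemma one_div_rpow_mul_one_div_rpow {x n : ℝ} (hx : 0 ≤ x) (hn : 0 ≤ n) (β : ℝ) :
    (1 / x) ^ β * (1 / n ^ β) = 1 / (n * x) ^ β := by
  rw [one_div, inv_rpow hx, mul_rpow hn hx]
  field_simp

lemma one_div_rpow_mul_lt_one_div_rpow_add {x y a b β : ℝ} (hy : 0 < y) (hyx : y < x)
    (ha : 0 ≤ a) (hb : 0 < b) (hβ : 0 < β) :
    (1 / x) ^ β * (1 / (a + b) ^ β) < 1 / (a * x + b * y) ^ β := by
  have hx : 0 < x := hy.trans hyx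
  rw [one_div_rpow_mul_one_div_rpow hx.le (by positivity)]
  exact one_div_lt_one_div_of_lt (by positivity) (rpow_lt_rpow (by positivity) (by nlinarith) hβ)

lemma one_div_rpow_add_lt_one_div_rpow_mul {x y a b β : ℝ} (hy : 0 < y) (hyx : y < x)
    (ha : 0 < a) (hb : 0 ≤ b) (hβ : 0 < β) :
    1 / (a * x + b * y) ^ β < (1 / y) ^ β * (1 / (a + b) ^ β) := by
  rw [one_div_rpow_mul_one_div_rpow hy.le (by positivity)]
  exact one_div_lt_one_div_of_lt (by positivity) (rpow_lt_rpow (by positivity) (by nlinarith) hβ)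

section StrictComparison

variable {ι : Type*} [Nonempty ι] {f g : ι → ℝ} {c : ℝ}

lemma mul_tsum_lt_tsum_of_forall_mul_lt (hf : Summable f) (hg : Summable g)
    (h : ∀ i, c * f i < g i) : c * ∑' i, f i < ∑' i, g i := by
  obtain ⟨i⟩ := ‹Nonempty ι›
  rw [← tsum_mul_left]
  exact (hf.mul_left c).tsum_lt_tsum (fun j => (h j).le) (h i) hg

lemma tsum_lt_mul_tsum_of_forall_lt_mul (hf : Summable f) (hg : Summable g)
    (h : ∀ i, f i < c * g i) : ∑' i, f i < c * ∑' i, g i := by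
  obtain ⟨i⟩ := ‹Nonempty ι›
  rw [← tsum_mul_left]
  exact hf.tsum_lt_tsum (fun j => (h j).le) (h i) (hg.mul_left c)

end StrictComparison

theorem stmt5_general (α β : ℝ) (hβ : 2 < β)
    (p₁ q₁ p₂ q₂ : ℤ)
    (hsign : 0 < ((p₁ : ℝ) - α * q₁) * ((p₂ : ℝ) - α * q₂))
    (habs : 0 < |(p₂ : ℝ) - α * q₂| ∧ |(p₂ : ℝ) - α * q₂| < |(p₁ : ℝ) - α * q₁|) :
    Summable (fun ab : {ab : ℕ × ℕ // 0 < ab.1 ∧ 0 < ab.2 ∧ Nat.gcd ab.1 ab.2 = 1} =>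
      1 / |((ab.1.1 : ℝ) * p₁ + (ab.1.2 : ℝ) * p₂) -
            α * ((ab.1.1 : ℝ) * q₁ + (ab.1.2 : ℝ) * q₂)| ^ β) ∧
    (1 / |(p₁ : ℝ) - α * q₁|) ^ β *
        (∑' ab : {ab : ℕ × ℕ // 0 < ab.1 ∧ 0 < ab.2 ∧ Nat.gcd ab.1 ab.2 = 1},
          1 / ((ab.1.1 + ab.1.2 : ℕ) : ℝ) ^ β) <
      (∑' ab : {ab : ℕ × ℕ // 0 < ab.1 ∧ 0 < ab.2 ∧ Nat.gcd ab.1 ab.2 = 1},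
        1 / |((ab.1.1 : ℝ) * p₁ + (ab.1.2 : ℝ) * p₂) -
              α * ((ab.1.1 : ℝ) * q₁ + (ab.1.2 : ℝ) * q₂)| ^ β) ∧
    (∑' ab : {ab : ℕ × ℕ // 0 < ab.1 ∧ 0 < ab.2 ∧ Nat.gcd ab.1 ab.2 = 1},
        1 / |((ab.1.1 : ℝ) * p₁ + (ab.1.2 : ℝ) * p₂) -
              α * ((ab.1.1 : ℝ) * q₁ + (ab.1.2 : ℝ) * q₂)| ^ β) <
      (1 / |(p₂ : ℝ) - α * q₂|) ^ β *
        (∑' ab : {ab : ℕ × ℕ // 0 < ab.1 ∧ 0 < ab.2 ∧ Nat.gcd ab.1 ab.2 = 1},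
          1 / ((ab.1.1 + ab.1.2 : ℕ) : ℝ) ^ β) := by
  obtain ⟨hx₂, hx₂₁⟩ := habs
  have hβ₀ : 0 < β := by linarith
  have : Nonempty {ab : ℕ × ℕ // 0 < ab.1 ∧ 0 < ab.2 ∧ Nat.gcd ab.1 ab.2 = 1} :=
    ⟨⟨(1, 1), by norm_num⟩⟩
  have hden : ∀ a b : ℕ, |((a : ℝ) * p₁ + (b : ℝ) * p₂) - α * ((a : ℝ) * q₁ + (b : ℝ) * q₂)| =
      a * |(p₁ : ℝ) - α * q₁| + b * |(p₂ : ℝ) - α * q₂| := fun a b => by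
    rw [← abs_mul_add_mul_of_mul_pos hsign (Nat.cast_nonneg a) (Nat.cast_nonneg b)]
    ring_nf
  have hlower : ∀ a b : ℕ, 0 < b → (1 / |(p₁ : ℝ) - α * q₁|) ^ β * (1 / ((a + b : ℕ) : ℝ) ^ β) <
      1 / |((a : ℝ) * p₁ + (b : ℝ) * p₂) - α * ((a : ℝ) * q₁ + (b : ℝ) * q₂)| ^ β :=
    fun a b hb => by
      rw [hden, Nat.cast_add]
      exact one_div_rpow_mul_lt_one_div_rpow_add hx₂ hx₂₁ a.cast_nonneg (by positivity) hβ₀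
  have hupper : ∀ a b : ℕ, 0 < a →
      1 / |((a : ℝ) * p₁ + (b : ℝ) * p₂) - α * ((a : ℝ) * q₁ + (b : ℝ) * q₂)| ^ β <
        (1 / |(p₂ : ℝ) - α * q₂|) ^ β * (1 / ((a + b : ℕ) : ℝ) ^ β) :=
    fun a b ha => by
      rw [hden, Nat.cast_add]
      exact one_div_rpow_add_lt_one_div_rpow_mul hx₂ hx₂₁ (by positivity) b.cast_nonneg hβ₀
  have hS := summable_one_div_add_rpow hβ
    (P := fun ab => 0 < ab.1 ∧ 0 < ab.2 ∧ Nat.gcd ab.1 ab.2 = 1) fun _ h => ⟨h.1, h.2.1⟩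
  refine ⟨?summable, mul_tsum_lt_tsum_of_forall_mul_lt hS ?summable fun ab => hlower _ _ ab.2.2.1,
    tsum_lt_mul_tsum_of_forall_lt_mul ?summable hS fun ab => hupper _ _ ab.2.1⟩
  exact (hS.mul_left _).of_nonneg_of_le (fun _ => by positivity) fun ab => (hupper _ _ ab.2.1).le

theorem stmt5 (α β : ℝ) (hα : 0 < α) (hirr : Irrational α) (hβ : 2 < β)
    (p₁ q₁ p₂ q₂ : ℤ)
    (hsign : 0 < ((p₁ : ℝ) - α * q₁) * ((p₂ : ℝ) - α * q₂))
    (habs : 0 < |(p₂ : ℝ) - α * q₂| ∧ |(p₂ : ℝ) - α * q₂| < |(p₁ : ℝ) - α * q₁|) :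
    Summable (fun ab : {ab : ℕ × ℕ // 0 < ab.1 ∧ 0 < ab.2 ∧ Nat.gcd ab.1 ab.2 = 1} =>
      1 / |((ab.1.1 : ℝ) * p₁ + (ab.1.2 : ℝ) * p₂) -
            α * ((ab.1.1 : ℝ) * q₁ + (ab.1.2 : ℝ) * q₂)| ^ β) ∧
    (1 / |(p₁ : ℝ) - α * q₁|) ^ β *
        (∑' ab : {ab : ℕ × ℕ // 0 < ab.1 ∧ 0 < ab.2 ∧ Nat.gcd ab.1 ab.2 = 1},
          1 / ((ab.1.1 + ab.1.2 : ℕ) : ℝ) ^ β) <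
      (∑' ab : {ab : ℕ × ℕ // 0 < ab.1 ∧ 0 < ab.2 ∧ Nat.gcd ab.1 ab.2 = 1},
        1 / |((ab.1.1 : ℝ) * p₁ + (ab.1.2 : ℝ) * p₂) -
              α * ((ab.1.1 : ℝ) * q₁ + (ab.1.2 : ℝ) * q₂)| ^ β) ∧
    (∑' ab : {ab : ℕ × ℕ // 0 < ab.1 ∧ 0 < ab.2 ∧ Nat.gcd ab.1 ab.2 = 1},
        1 / |((ab.1.1 : ℝ) * p₁ + (ab.1.2 : ℝ) * p₂) -
              α * ((ab.1.1 : ℝ) * q₁ + (ab.1.2 : ℝ) * q₂)| ^ β) <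
      (1 / |(p₂ : ℝ) - α * q₂|) ^ β *
        (∑' ab : {ab : ℕ × ℕ // 0 < ab.1 ∧ 0 < ab.2 ∧ Nat.gcd ab.1 ab.2 = 1},
          1 / ((ab.1.1 + ab.1.2 : ℕ) : ℝ) ^ β) :=
  stmt5_general α β hβ p₁ q₁ p₂ q₂ hsign habs
end

section
/- For every real number β > 2 there exists a constant c > 0 such that for every positive irrational real number α and every integer N with N ≥ 1 and N ≥ N₀, writing N = N_m + k with 0 ≤ k < a_{m+1}, one has d_N^β ≤ Z_N(α;β) ≤ c · N · d_{N_m}^β. -/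
/-- The Farey matrix `A₀ = [[1,0],[1,1]]`. -/
def A0 : Matrix (Fin 2) (Fin 2) ℤ := !![1, 0; 1, 1]

/-- The Farey matrix `A₁ = [[1,1],[0,1]]`. -/
def A1 : Matrix (Fin 2) (Fin 2) ℤ := !![1, 1; 0, 1]

/-- The product `A_{σ₁}A_{σ₂}⋯A_{σ_N}` associated to a word `σ ∈ {0,1}^N`
(`false` codes `0`, `true` codes `1`). -/
def wordProd {N : ℕ} (σ : Fin N → Bool) : Matrix (Fin 2) (Fin 2) ℤ :=
  (List.ofFn fun i => if σ i then A1 else A0).prod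

/-- The Diophantine partition function
`Z_N(α;β) = Σ_{σ ∈ {0,1}^N} |p_σ - α q_σ|^{-β}`, where `(p_σ, q_σ)` is the
right column of `A_{σ₁}⋯A_{σ_N}`. -/
noncomputable def Zpart (N : ℕ) (α β : ℝ) : ℝ :=
  ∑ σ : Fin N → Bool,
    |((wordProd σ 0 1 : ℤ) : ℝ) - α * ((wordProd σ 1 1 : ℤ) : ℝ)| ^ (-β)

/-- Iterates of the Gauss map starting at `α`: `x₀ = α`, `x_{m+1} = 1/(x_m - ⌊x_m⌋)`. -/
noncomputable def gaussIter (α : ℝ) : ℕ → ℝ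
  | 0 => α
  | n + 1 => (gaussIter α n - (⌊gaussIter α n⌋ : ℝ))⁻¹

/-- The continued fraction coefficients of `α`: `a_m = ⌊x_m⌋`. -/
noncomputable def cfA (α : ℝ) (n : ℕ) : ℤ := ⌊gaussIter α n⌋

/-- Numerators of the convergents, shifted by one: `pConv a (m+1) = p_m`, with
`p₋₁ = 1`, `p₀ = a₀`, `p_m = a_m p_{m-1} + p_{m-2}`. -/
def pConv (a : ℕ → ℤ) : ℕ → ℤ
  | 0 => 1
  | 1 => a 0
  | n + 2 => a (n + 1) * pConv a (n + 1) + pConv a n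

/-- Denominators of the convergents, shifted by one: `qConv a (m+1) = q_m`, with
`q₋₁ = 0`, `q₀ = 1`, `q_m = a_m q_{m-1} + q_{m-2}`. -/
def qConv (a : ℕ → ℤ) : ℕ → ℤ
  | 0 => 0
  | 1 => 1
  | n + 2 => a (n + 1) * qConv a (n + 1) + qConv a n

/-- `N_m = a₀ + a₁ + ⋯ + a_m`. -/
def Nsum (a : ℕ → ℤ) (m : ℕ) : ℤ := ∑ i ∈ Finset.range (m + 1), a i

/-- `d_N = 1/|P_N - α Q_N|` for `N = N_m + k` with `0 ≤ k < a_{m+1}`: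
`(P_N, Q_N) = (p_m, q_m)` if `k = 0`, and
`(P_N, Q_N) = (k p_m + p_{m-1}, k q_m + q_{m-1})` if `k ≥ 1`. -/
noncomputable def dd (α : ℝ) (m k : ℕ) : ℝ :=
  if k = 0 then
    1 / |((pConv (cfA α) (m + 1) : ℤ) : ℝ) - α * ((qConv (cfA α) (m + 1) : ℤ) : ℝ)|
  else
    1 / |(((k : ℤ) * pConv (cfA α) (m + 1) + pConv (cfA α) m : ℤ) : ℝ) -
          α * (((k : ℤ) * qConv (cfA α) (m + 1) + qConv (cfA α) m : ℤ) : ℝ)|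

/-!
Reading a word letter by letter, the columns of `A_{σ₁} ⋯ A_{σⱼ}` change by mediants, so the
terms of `Z_N` sit at the leaves of a binary tree of pairs of columns. Along the Farey descent
towards `α` (replace the column farther from the line `p = α q` by the mediant) the pairs are
consecutive convergents and intermediate fractions of `α`; up to depth `N` all of them satisfy
`|p - α q| ≥ |p_m - α q_m| = 1 / d_{N_m}`. Every subtree branching off this path has both
columns on the same side of the line, so its terms do not cancel and are bounded by
`d_{N_m}^β ((p + 1) q)^{-β/2}`, which is summable over `(p, q)` for `β > 2`. The `N` subtrees and
the leaf of the path give the upper bound; the lower bound is the single term whose right column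
is `(P_N, Q_N)`, one of the two columns at depth `N` of the path.
-/

namespace DiophantinePartition

/-- `colStep b c = A_b *ᵥ c`. -/
def colStep : Bool → ℤ × ℤ → ℤ × ℤ
  | true, c => (c.1 + c.2, c.2)
  | false, c => (c.1, c.1 + c.2)

def leftCol (L : List Bool) : ℤ × ℤ := L.foldr colStep (1, 0)

def rightCol (L : List Bool) : ℤ × ℤ := L.foldr colStep (0, 1)

/-- The columns of `M * A_b`, in terms of the columns `w` of `M`. -/
def child : Bool → (ℤ × ℤ) × (ℤ × ℤ) → (ℤ × ℤ) × (ℤ × ℤ)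
  | true, w => (w.1, w.1 + w.2)
  | false, w => (w.1 + w.2, w.2)

lemma colStep_add (b : Bool) (c d : ℤ × ℤ) : colStep b (c + d) = colStep b c + colStep b d := by
  cases b <;> simp only [colStep, Prod.fst_add, Prod.snd_add, Prod.mk_add_mk] <;> congr 1 <;> ring

lemma rightCol_nonneg (L : List Bool) : 0 ≤ (rightCol L).1 ∧ 0 < (rightCol L).2 := by
  induction L with
  | nil => simp [rightCol]
  | cons b L ih => cases b <;> simp only [rightCol, List.foldr_cons, colStep] at ih ⊢ <;> omega

lemma colStep_injective (b : Bool) : Function.Injective (colStep b) := by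
  rintro ⟨c₁, c₂⟩ ⟨d₁, d₂⟩ h
  cases b <;> simp only [colStep, Prod.mk.injEq] at h <;> ext <;> omega

lemma rightCol_injective {L L' : List Bool} (hlen : L.length = L'.length)
    (h : rightCol L = rightCol L') : L = L' := by
  induction L generalizing L' with
  | nil => cases L' <;> simp_all
  | cons b L ih =>
    obtain _ | ⟨b', L'⟩ := L'
    · simp at hlen
    have hL := rightCol_nonneg L
    have hL' := rightCol_nonneg L'
    simp only [rightCol, List.foldr_cons] at h hL hL'
    obtain rfl : b = b' := by
      cases b <;> cases b' <;> simp only [colStep, Prod.mk.injEq] at h <;> first | rfl | omega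
    rw [ih (by simpa using hlen) (colStep_injective b h)]

lemma cols_append_singleton (L : List Bool) (b : Bool) :
    (leftCol (L ++ [b]), rightCol (L ++ [b])) = child b (leftCol L, rightCol L) := by
  induction L with
  | nil => cases b <;> rfl
  | cons a L ih =>
    simp only [leftCol, rightCol, List.cons_append, List.foldr_cons] at ih ⊢
    rw [Prod.ext_iff] at ih
    cases b <;> simp only [child] at ih ⊢ <;> rw [ih.1, ih.2, colStep_add]

lemma exists_rightCol_eq_leftCol (L : List Bool) (h : leftCol L ≠ (1, 0)) :
    ∃ L' : List Bool, L'.length = L.length ∧ rightCol L' = leftCol L := by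
  induction L using List.reverseRecOn with
  | nil => exact absurd rfl h
  | append_singleton L b ih =>
    have hT := cols_append_singleton L true
    have hF := cols_append_singleton L false
    simp only [child, Prod.mk.injEq] at hT hF
    cases b with
    | false => exact ⟨L ++ [true], by simp, by rw [hT.2, hF.1]⟩
    | true =>
      obtain ⟨L', hlen, hL'⟩ := ih (by rwa [← hT.1])
      have hF' := congrArg Prod.snd (cols_append_singleton L' false)
      simp only [child] at hF'
      exact ⟨L' ++ [false], by simp [hlen], by rw [hF', hL', hT.1]⟩

def fareyMat (b : Bool) : Matrix (Fin 2) (Fin 2) ℤ := if b then A1 else A0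

lemma prod_fareyMat_col (L : List Bool) :
    ((L.map fareyMat).prod 0 1, (L.map fareyMat).prod 1 1) = rightCol L := by
  induction L with
  | nil => simp [rightCol]
  | cons b L ih =>
    simp only [rightCol, List.foldr_cons, List.map_cons, List.prod_cons] at ih ⊢
    rw [← ih]
    cases b <;> simp [fareyMat, A0, A1, colStep, Matrix.mul_apply, Fin.sum_univ_two]

lemma wordProd_col {N : ℕ} (σ : Fin N → Bool) :
    (wordProd σ 0 1, wordProd σ 1 1) = rightCol (List.ofFn σ) := by
  rw [← prod_fareyMat_col, List.map_ofFn]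
  rfl

def err (α : ℝ) (c : ℤ × ℤ) : ℝ := c.1 - α * c.2

@[simp] lemma err_add (α : ℝ) (c d : ℤ × ℤ) : err α (c + d) = err α c + err α d := by
  simp only [err, Prod.fst_add, Prod.snd_add, Int.cast_add]; ring

@[simp] lemma err_zsmul (α : ℝ) (n : ℤ) (c : ℤ × ℤ) : err α (n • c) = n * err α c := by
  simp only [err, Prod.smul_fst, Prod.smul_snd, smul_eq_mul, Int.cast_mul]; ring

noncomputable def summand (α β : ℝ) (w : (ℤ × ℤ) × (ℤ × ℤ)) (c : ℤ × ℤ) : ℝ :=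
  |err α w.1 * c.1 + err α w.2 * c.2| ^ (-β)

lemma summand_colStep (α β : ℝ) (w : (ℤ × ℤ) × (ℤ × ℤ)) (b : Bool) (c : ℤ × ℤ) :
    summand α β w (colStep b c) = summand α β (child b w) c := by
  cases b <;> simp only [summand, colStep, child, err_add, Int.cast_add] <;> ring_nf

/-- `Z_n` for the products `M * A_{σ₁} ⋯ A_{σₙ}`, where `M` has columns `w`: their right
columns are `p_σ • w.1 + q_σ • w.2`. -/
noncomputable def partSum (α β : ℝ) (n : ℕ) (w : (ℤ × ℤ) × (ℤ × ℤ)) : ℝ :=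
  ∑ σ : Fin n → Bool, summand α β w (rightCol (List.ofFn σ))

lemma partSum_zero (α β : ℝ) (w : (ℤ × ℤ) × (ℤ × ℤ)) :
    partSum α β 0 w = |err α w.2| ^ (-β) := by
  simp [partSum, summand, rightCol]

lemma rightCol_ofFn_cons {n : ℕ} (b : Bool) (τ : Fin n → Bool) :
    rightCol (List.ofFn (Fin.cons b τ : Fin (n + 1) → Bool)) =
      colStep b (rightCol (List.ofFn τ)) := by
  simp [rightCol, List.ofFn_succ]

lemma partSum_succ (α β : ℝ) (n : ℕ) (w : (ℤ × ℤ) × (ℤ × ℤ)) (d : Bool) :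
    partSum α β (n + 1) w = partSum α β n (child d w) + partSum α β n (child (!d) w) := by
  have split : partSum α β (n + 1) w = ∑ b : Bool, partSum α β n (child b w) := by
    rw [partSum, ← (Fin.consEquiv fun _ => Bool).sum_comp, Fintype.sum_prod_type]
    refine Fintype.sum_congr _ _ fun b => Fintype.sum_congr _ _ fun τ => ?_
    change summand α β w (rightCol (List.ofFn (Fin.cons b τ : Fin (n + 1) → Bool))) = _
    rw [rightCol_ofFn_cons, summand_colStep]
  rw [split, Fintype.sum_bool]
  cases d <;> simp [add_comm]

lemma Zpart_eq_partSum (N : ℕ) (α β : ℝ) : Zpart N α β = partSum α β N ((1, 0), (0, 1)) := by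
  refine Finset.sum_congr rfl fun σ _ => ?_
  rw [← wordProd_col]
  simp [summand, err, sub_eq_add_neg]

lemma rpow_neg_err_rightCol_le_Zpart {N : ℕ} (α β : ℝ) (σ : Fin N → Bool) :
    |err α (rightCol (List.ofFn σ))| ^ (-β) ≤ Zpart N α β := by
  refine le_of_eq_of_le ?_ (Finset.single_le_sum
    (fun τ _ => Real.rpow_nonneg (abs_nonneg _) _) (Finset.mem_univ σ))
  rw [← wordProd_col]
  rfl

lemma mul_add_nonneg_of_abs_le {a b : ℝ} (h : |b| ≤ |a|) : 0 ≤ a * (a + b) := by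
  nlinarith [abs_mul_abs_self a, abs_mul a b, neg_abs_le (a * b),
    mul_le_mul_of_nonneg_left h (abs_nonneg a)]

lemma mul_le_abs_mul_add_mul {ε A B p q : ℝ} (hA : ε ≤ |A|) (hB : ε ≤ |B|) (hAB : 0 ≤ A * B)
    (hp : 0 ≤ p) (hq : 0 ≤ q) : ε * (p + q) ≤ |A * p + B * q| := by
  have habs : |A * p + B * q| = |A| * p + |B| * q := by
    rcases mul_nonneg_iff.mp hAB with ⟨hA0, hB0⟩ | ⟨hA0, hB0⟩
    · rw [abs_of_nonneg hA0, abs_of_nonneg hB0, abs_of_nonneg (by positivity)]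
    · rw [abs_of_nonpos hA0, abs_of_nonpos hB0, abs_of_nonpos (by nlinarith)]
      ring
  rw [habs]
  nlinarith

lemma rpow_neg_add_le {β p q : ℝ} (hβ : 0 ≤ β) (hp : 0 ≤ p) (hq : 1 ≤ q) :
    (p + q) ^ (-β) ≤ (p + 1) ^ (-(β / 2)) * q ^ (-(β / 2)) := by
  rw [← Real.mul_rpow (by linarith) (by linarith),
    show -β = 2 * -(β / 2) by ring, Real.rpow_mul (by linarith), Real.rpow_two]
  exact Real.rpow_le_rpow_of_nonpos (by positivity) (by nlinarith) (by linarith)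

noncomputable def pairRpow (β : ℝ) (c : ℕ × ℕ) : ℝ :=
  ((c.1 : ℝ) + 1) ^ (-(β / 2)) * (c.2 : ℝ) ^ (-(β / 2))

/-- `pairRpowSum β = ζ(β/2)²`. -/
noncomputable def pairRpowSum (β : ℝ) : ℝ := ∑' c, pairRpow β c

lemma pairRpow_nonneg (β : ℝ) (c : ℕ × ℕ) : 0 ≤ pairRpow β c := by
  unfold pairRpow; positivity

lemma summable_pairRpow {β : ℝ} (hβ : 2 < β) : Summable (pairRpow β) := by
  have hg : Summable fun n : ℕ => (n : ℝ) ^ (-(β / 2)) := Real.summable_nat_rpow.mpr (by linarith)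
  have hf : Summable fun n : ℕ => ((n : ℝ) + 1) ^ (-(β / 2)) := by
    simpa using (summable_nat_add_iff 1).mpr hg
  exact hf.mul_of_nonneg hg (fun _ => by positivity) (fun _ => by positivity)

lemma pairRpowSum_nonneg (β : ℝ) : 0 ≤ pairRpowSum β :=
  tsum_nonneg (pairRpow_nonneg β)

/-- No cancellation occurs, and distinct words of the same length have distinct right columns,
so the terms are dominated by distinct terms of `pairRpowSum β`. -/
lemma partSum_le_of_sameSign {α β ε : ℝ} (hβ : 2 < β) (hε : 0 < ε) (n : ℕ)
    {w : (ℤ × ℤ) × (ℤ × ℤ)} (hw : 0 ≤ err α w.1 * err α w.2)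
    (h₁ : ε ≤ |err α w.1|) (h₂ : ε ≤ |err α w.2|) :
    partSum α β n w ≤ ε ^ (-β) * pairRpowSum β := by
  set ι : (Fin n → Bool) → ℕ × ℕ :=
    fun σ => ((rightCol (List.ofFn σ)).1.toNat, (rightCol (List.ofFn σ)).2.toNat)
  have hι : Set.InjOn ι (Finset.univ : Finset (Fin n → Bool)) := by
    intro σ _ τ _ h
    have hσ := rightCol_nonneg (List.ofFn σ)
    have hτ := rightCol_nonneg (List.ofFn τ)
    simp only [ι, Prod.mk.injEq] at h
    exact List.ofFn_injective (rightCol_injective (by simp) (Prod.ext (by omega) (by omega)))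
  have hterm : ∀ σ, summand α β w (rightCol (List.ofFn σ)) ≤ ε ^ (-β) * pairRpow β (ι σ) := by
    intro σ
    obtain ⟨hp, hq⟩ := rightCol_nonneg (List.ofFn σ)
    simp only [ι, pairRpow, ← Int.cast_natCast (R := ℝ), Int.toNat_of_nonneg hp,
      Int.toNat_of_nonneg hq.le]
    have hq' : (1 : ℝ) ≤ (rightCol (List.ofFn σ)).2 := by exact_mod_cast hq
    calc summand α β w (rightCol (List.ofFn σ))
        ≤ (ε * ((rightCol (List.ofFn σ)).1 + (rightCol (List.ofFn σ)).2 : ℝ)) ^ (-β) :=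
          Real.rpow_le_rpow_of_nonpos (by positivity)
            (mul_le_abs_mul_add_mul h₁ h₂ hw (by exact_mod_cast hp) (by linarith)) (by linarith)
      _ ≤ _ := by
          rw [Real.mul_rpow hε.le (by positivity)]
          gcongr
          exact rpow_neg_add_le (by linarith) (by exact_mod_cast hp) hq'
  calc partSum α β n w
      ≤ ∑ σ, ε ^ (-β) * pairRpow β (ι σ) := Finset.sum_le_sum fun σ _ => hterm σ
    _ = ε ^ (-β) * ∑ c ∈ Finset.univ.image ι, pairRpow β c := by
        rw [Finset.sum_image hι, Finset.mul_sum]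
    _ ≤ ε ^ (-β) * pairRpowSum β := by
        gcongr
        exact (summable_pairRpow hβ).sum_le_tsum _ fun c _ => pairRpow_nonneg β c

noncomputable def dir (α : ℝ) (w : (ℤ × ℤ) × (ℤ × ℤ)) : Bool :=
  decide (|err α w.1| ≤ |err α w.2|)

/-- The column farther from the line `p = α q` is replaced by the mediant. -/
noncomputable def descend (α : ℝ) (w : (ℤ × ℤ) × (ℤ × ℤ)) : (ℤ × ℤ) × (ℤ × ℤ) :=
  child (dir α w) w

noncomputable def path (α : ℝ) (j : ℕ) : (ℤ × ℤ) × (ℤ × ℤ) :=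
  (descend α)^[j] ((1, 0), (0, 1))

lemma sameSign_child_not_dir (α : ℝ) (w : (ℤ × ℤ) × (ℤ × ℤ)) :
    0 ≤ err α (child (!dir α w) w).1 * err α (child (!dir α w) w).2 := by
  cases hd : dir α w <;>
    simp only [dir, decide_eq_true_eq, decide_eq_false_iff_not, not_le] at hd <;>
    simp only [Bool.not_true, Bool.not_false, child, err_add]
  · exact mul_add_nonneg_of_abs_le hd.le
  · rw [add_comm, mul_comm]
    exact mul_add_nonneg_of_abs_le hd

/-- Only the branch following the descent can carry a small denominator; every sibling branch
is a same-sign sum, costing at most `ε ^ (-β) * pairRpowSum β` per generation. -/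
lemma partSum_le_of_forall_le {α β ε : ℝ} (hβ : 2 < β) (hε : 0 < ε) (n : ℕ)
    (w : (ℤ × ℤ) × (ℤ × ℤ))
    (hw : ∀ j ≤ n, ε ≤ |err α ((descend α)^[j] w).1| ∧ ε ≤ |err α ((descend α)^[j] w).2|) :
    partSum α β n w ≤ ε ^ (-β) * (1 + n * pairRpowSum β) := by
  induction n generalizing w with
  | zero =>
    rw [partSum_zero, Nat.cast_zero, zero_mul, add_zero, mul_one]
    exact Real.rpow_le_rpow_of_nonpos hε (hw 0 le_rfl).2 (by linarith)
  | succ n ih =>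
    have hdescend := ih (descend α w) fun j hj => by
      simpa only [← Function.iterate_succ_apply] using hw (j + 1) (by omega)
    obtain ⟨h₁, h₂⟩ := hw 0 (Nat.zero_le _)
    obtain ⟨h₁', h₂'⟩ := hw 1 (by omega)
    -- the sibling's columns are a column of `w` and the mediant, a column of `descend α w`
    have hsibling : partSum α β n (child (!dir α w) w) ≤ ε ^ (-β) * pairRpowSum β := by
      refine partSum_le_of_sameSign hβ hε n (sameSign_child_not_dir α w) ?_ ?_ <;>
        cases hd : dir α w <;>
        simp_all only [Function.iterate_zero, id_eq, Function.iterate_one, descend, child,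
          Bool.not_true, Bool.not_false]
    rw [partSum_succ α β n w (dir α w)]
    change partSum α β n (descend α w) + _ ≤ _
    push_cast
    linarith

lemma exists_cols_eq_path (α : ℝ) (j : ℕ) :
    ∃ L : List Bool, L.length = j ∧ (leftCol L, rightCol L) = path α j := by
  induction j with
  | zero => exact ⟨[], rfl, rfl⟩
  | succ j ih =>
    obtain ⟨L, hlen, hL⟩ := ih
    refine ⟨L ++ [dir α (path α j)], by simp [hlen], ?_⟩
    rw [cols_append_singleton, hL, path, path, Function.iterate_succ_apply']
    rfl

lemma rpow_neg_err_le_Zpart_of_mem_path {α β : ℝ} {N : ℕ} {c : ℤ × ℤ}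
    (hc : c = (path α N).1 ∨ c = (path α N).2) (hc₂ : 0 < c.2) :
    |err α c| ^ (-β) ≤ Zpart N α β := by
  obtain ⟨L, hlen, hL⟩ := exists_cols_eq_path α N
  rw [← hL] at hc
  obtain ⟨L', hlen', hL'⟩ : ∃ L' : List Bool, L'.length = N ∧ rightCol L' = c := by
    rcases hc with rfl | rfl
    · obtain ⟨L', h₁, h₂⟩ := exists_rightCol_eq_leftCol L fun h => by simp [h] at hc₂
      exact ⟨L', h₁.trans hlen, h₂⟩
    · exact ⟨L, hlen, rfl⟩
  subst hlen'
  simpa [hL'] using rpow_neg_err_rightCol_le_Zpart α β L'.get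

variable {α : ℝ}

lemma gaussIter_irrational (hα : Irrational α) : ∀ n, Irrational (gaussIter α n)
  | 0 => hα
  | n + 1 => ((gaussIter_irrational hα n).sub_intCast _).inv

lemma fract_gaussIter_pos (hα : Irrational α) (n : ℕ) : 0 < Int.fract (gaussIter α n) :=
  Int.fract_pos.mpr ((gaussIter_irrational hα n).ne_int _)

lemma one_lt_gaussIter_succ (hα : Irrational α) (n : ℕ) : 1 < gaussIter α (n + 1) :=
  (one_lt_inv₀ (fract_gaussIter_pos hα n)).mpr (Int.fract_lt_one _)

lemma cfA_lt_gaussIter (hα : Irrational α) (n : ℕ) : (cfA α n : ℝ) < gaussIter α n := by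
  have := fract_gaussIter_pos hα n
  rw [Int.fract] at this
  rw [cfA]
  linarith

lemma gaussIter_succ_mul (hα : Irrational α) (n : ℕ) :
    gaussIter α (n + 1) * (gaussIter α n - cfA α n) = 1 :=
  inv_mul_cancel₀ (fract_gaussIter_pos hα n).ne'

lemma one_le_cfA_succ (hα : Irrational α) (n : ℕ) : 1 ≤ cfA α (n + 1) :=
  Int.le_floor.mpr (by exact_mod_cast (one_lt_gaussIter_succ hα n).le)

lemma cfA_nonneg (hα₀ : 0 < α) (hα : Irrational α) : ∀ n, 0 ≤ cfA α n
  | 0 => Int.floor_nonneg.mpr hα₀.le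
  | n + 1 => zero_le_one.trans (one_le_cfA_succ hα n)

lemma qConv_nonneg_and_one_le_succ {a : ℕ → ℤ} (ha : ∀ n, 1 ≤ a (n + 1)) (n : ℕ) :
    0 ≤ qConv a n ∧ 1 ≤ qConv a (n + 1) := by
  induction n with
  | zero => simp [qConv]
  | succ n ih =>
    refine ⟨by linarith [ih.2], ?_⟩
    rw [qConv]
    nlinarith [ha n]

/-- `conv α (m + 1) = (p_m, q_m)`. -/
noncomputable def conv (α : ℝ) (t : ℕ) : ℤ × ℤ := (pConv (cfA α) t, qConv (cfA α) t)

noncomputable def prevConv (α : ℝ) : ℕ → ℤ × ℤ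
  | 0 => (0, 1)
  | t + 1 => conv α t

/-- The intermediate fractions `i p_m + p_{m-1}` over `i q_m + q_{m-1}`, for `t = m + 1`. -/
noncomputable def interConv (α : ℝ) (t : ℕ) (i : ℤ) : ℤ × ℤ := i • conv α t + prevConv α t

lemma conv_succ (t : ℕ) : conv α (t + 1) = interConv α t (cfA α t) := by
  cases t <;> simp [conv, interConv, prevConv, pConv, qConv]

lemma interConv_succ_zero (t : ℕ) : interConv α (t + 1) 0 = conv α t := by
  simp [interConv, prevConv]

lemma add_interConv (t : ℕ) (i : ℤ) :
    conv α t + interConv α t i = interConv α t (i + 1) := by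
  rw [interConv, interConv, add_smul, one_smul]
  abel

lemma err_prevConv (hα : Irrational α) (t : ℕ) :
    err α (prevConv α t) = -gaussIter α t * err α (conv α t) := by
  induction t with
  | zero => simp [err, prevConv, conv, pConv, qConv, gaussIter]
  | succ t ih =>
    have hx := gaussIter_succ_mul hα t
    rw [show prevConv α (t + 1) = conv α t from rfl, conv_succ, interConv, err_add, err_zsmul, ih]
    linear_combination (-err α (conv α t)) * hx

lemma err_interConv (hα : Irrational α) (t : ℕ) (i : ℤ) :
    err α (interConv α t i) = (i - gaussIter α t) * err α (conv α t) := by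
  rw [interConv, err_add, err_zsmul, err_prevConv hα]
  ring

lemma abs_err_conv_succ_mul (hα : Irrational α) (t : ℕ) :
    |err α (conv α (t + 1))| * gaussIter α (t + 1) = |err α (conv α t)| := by
  have h := err_prevConv hα (t + 1)
  rw [prevConv] at h
  rw [h, abs_mul, abs_neg, abs_of_pos (zero_lt_one.trans (one_lt_gaussIter_succ hα t)), mul_comm]

lemma err_conv_ne_zero (hα : Irrational α) (t : ℕ) : err α (conv α t) ≠ 0 := by
  induction t with
  | zero => simp [err, conv, pConv, qConv]
  | succ t ih =>
    intro h
    have := abs_err_conv_succ_mul hα t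
    rw [h, abs_zero, zero_mul, eq_comm, abs_eq_zero] at this
    exact ih this

lemma antitone_abs_err_conv (hα : Irrational α) : Antitone fun t => |err α (conv α t)| := by
  refine antitone_nat_of_succ_le fun t => ?_
  rw [← abs_err_conv_succ_mul hα t]
  exact le_mul_of_one_le_right (abs_nonneg _) (one_lt_gaussIter_succ hα t).le

lemma abs_err_conv_lt_abs_err_interConv (hα : Irrational α) {t : ℕ} {i : ℤ} (hi : i < cfA α t) :
    |err α (conv α t)| < |err α (interConv α t i)| := by
  have hgap : 1 < gaussIter α t - i := by
    have : (i : ℝ) + 1 ≤ cfA α t := by exact_mod_cast hi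
    linarith [cfA_lt_gaussIter hα t]
  rw [err_interConv hα, abs_mul, abs_sub_comm, abs_of_pos (by linarith : 0 < gaussIter α t - i)]
  exact lt_mul_of_one_lt_left (abs_pos.mpr (err_conv_ne_zero hα t)) hgap

/-- The Farey pair after `i` steps of the descent through the `t`-th partial quotient; the
convergent is on the left exactly when its error is positive, i.e. for even `t`. -/
noncomputable def node (α : ℝ) (t i : ℕ) : (ℤ × ℤ) × (ℤ × ℤ) :=
  if Even t then (conv α t, interConv α t i) else (interConv α t i, conv α t)

lemma conv_mem_node (t i : ℕ) : conv α t = (node α t i).1 ∨ conv α t = (node α t i).2 := by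
  unfold node; split_ifs <;> simp

lemma interConv_mem_node (t i : ℕ) :
    interConv α t i = (node α t i).1 ∨ interConv α t i = (node α t i).2 := by
  unfold node; split_ifs <;> simp

lemma abs_err_conv_le_node (hα : Irrational α) {t i : ℕ} (hi : (i : ℤ) < cfA α t) :
    |err α (conv α t)| ≤ |err α (node α t i).1| ∧ |err α (conv α t)| ≤ |err α (node α t i).2| := by
  have := (abs_err_conv_lt_abs_err_interConv hα hi).le
  unfold node; split_ifs <;> exact ⟨by simp [this], by simp [this]⟩

lemma descend_node (hα : Irrational α) {t i : ℕ} (hi : (i : ℤ) < cfA α t) :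
    descend α (node α t i) = node α t (i + 1) := by
  have hlt := abs_err_conv_lt_abs_err_interConv hα hi
  unfold node descend dir
  split_ifs
  · simp [hlt.le, child, add_interConv]
  · simp [not_le.mpr hlt, child, add_comm (interConv α t i), add_interConv]

lemma node_toNat_cfA (hα₀ : 0 < α) (hα : Irrational α) (t : ℕ) :
    node α t (cfA α t).toNat = node α (t + 1) 0 := by
  unfold node
  rw [Int.toNat_of_nonneg (cfA_nonneg hα₀ hα t), ← conv_succ, Nat.cast_zero, interConv_succ_zero]
  by_cases ht : Even t <;> simp [ht, Nat.even_add_one]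

lemma exists_eq_sum_range_add_of_lt {f : ℕ → ℕ} {t j : ℕ}
    (hj : j < ∑ s ∈ Finset.range t, f s) :
    ∃ s < t, ∃ i < f s, j = ∑ r ∈ Finset.range s, f r + i := by
  induction t with
  | zero => simp at hj
  | succ t ih =>
    rw [Finset.sum_range_succ] at hj
    by_cases h : j < ∑ s ∈ Finset.range t, f s
    · obtain ⟨s, hs, i, hi, rfl⟩ := ih h
      exact ⟨s, hs.trans (Nat.lt_succ_self t), i, hi, rfl⟩
    · exact ⟨t, Nat.lt_succ_self t, j - ∑ s ∈ Finset.range t, f s, by omega, by omega⟩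

/-- `cfSum α (m + 1) = N_m`. -/
noncomputable def cfSum (α : ℝ) (t : ℕ) : ℕ := ∑ s ∈ Finset.range t, (cfA α s).toNat

lemma cfSum_succ (t : ℕ) : cfSum α (t + 1) = cfSum α t + (cfA α t).toNat :=
  Finset.sum_range_succ _ _

lemma natCast_cfSum (hα₀ : 0 < α) (hα : Irrational α) (m : ℕ) :
    (cfSum α (m + 1) : ℤ) = Nsum (cfA α) m := by
  rw [cfSum, Nsum, Nat.cast_sum]
  exact Finset.sum_congr rfl fun s _ => Int.toNat_of_nonneg (cfA_nonneg hα₀ hα s)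

lemma path_zero : path α 0 = node α 0 0 := by
  simp [path, node, conv, interConv, prevConv, pConv, qConv]

lemma path_add_of_eq_node (hα : Irrational α) {j t : ℕ} (hj : path α j = node α t 0) :
    ∀ i ≤ (cfA α t).toNat, path α (j + i) = node α t i
  | 0, _ => hj
  | i + 1, hi => by
    rw [← add_assoc, path, Function.iterate_succ_apply', ← path,
      path_add_of_eq_node hα hj i (by omega), descend_node hα (by omega)]

lemma path_cfSum_add (hα₀ : 0 < α) (hα : Irrational α) (t : ℕ) :
    ∀ i ≤ (cfA α t).toNat, path α (cfSum α t + i) = node α t i := by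
  refine path_add_of_eq_node hα ?_
  induction t with
  | zero => exact path_zero
  | succ t ih =>
    rw [cfSum_succ, path_add_of_eq_node hα ih _ le_rfl,
      node_toNat_cfA hα₀ hα]

lemma abs_err_conv_le_path (hα₀ : 0 < α) (hα : Irrational α) {t j : ℕ} (hj : j < cfSum α (t + 1)) :
    |err α (conv α t)| ≤ |err α (path α j).1| ∧ |err α (conv α t)| ≤ |err α (path α j).2| := by
  obtain ⟨s, hs, i, hi, rfl⟩ := exists_eq_sum_range_add_of_lt hj
  rw [← cfSum, path_cfSum_add hα₀ hα s i hi.le]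
  have hconv := antitone_abs_err_conv hα (Nat.le_of_lt_succ hs)
  have hnode := abs_err_conv_le_node hα (i := i) (t := s) (by omega)
  exact ⟨hconv.trans hnode.1, hconv.trans hnode.2⟩

lemma dd_zero (m : ℕ) : dd α m 0 = |err α (conv α (m + 1))|⁻¹ := by
  simp [dd, err, conv]

lemma dd_of_ne_zero {m k : ℕ} (hk : k ≠ 0) : dd α m k = |err α (interConv α (m + 1) k)|⁻¹ := by
  simp [dd, hk, err, interConv, prevConv, conv]

lemma inv_abs_rpow (x β : ℝ) : |x|⁻¹ ^ β = |x| ^ (-β) := by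
  rw [Real.inv_rpow (abs_nonneg x), Real.rpow_neg (abs_nonneg x)]

lemma Zpart_le_mul_dd_rpow (hα₀ : 0 < α) (hα : Irrational α) {β : ℝ} (hβ : 2 < β) {N m k : ℕ}
    (hN : 1 ≤ N) (hNk : N = cfSum α (m + 1) + k) (hk : k < (cfA α (m + 1)).toNat) :
    Zpart N α β ≤ (1 + pairRpowSum β) * N * dd α m 0 ^ β := by
  have hε : 0 < |err α (conv α (m + 1))| := abs_pos.mpr (err_conv_ne_zero hα _)
  have hpath : ∀ j ≤ N, |err α (conv α (m + 1))| ≤ |err α (path α j).1| ∧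
      |err α (conv α (m + 1))| ≤ |err α (path α j).2| := fun j hj =>
    abs_err_conv_le_path hα₀ hα (by rw [cfSum_succ]; omega)
  have hK := pairRpowSum_nonneg β
  have hN' : (1 : ℝ) ≤ N := by exact_mod_cast hN
  calc Zpart N α β
      ≤ |err α (conv α (m + 1))| ^ (-β) * (1 + N * pairRpowSum β) := by
        rw [Zpart_eq_partSum]
        exact partSum_le_of_forall_le hβ hε N _ hpath
    _ ≤ (1 + pairRpowSum β) * N * dd α m 0 ^ β := by
        rw [dd_zero, inv_abs_rpow, mul_comm]
        gcongr
        nlinarith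

lemma dd_rpow_le_Zpart (hα : Irrational α) (β : ℝ) {N m k : ℕ}
    (hpath : path α N = node α (m + 1) k) : dd α m k ^ β ≤ Zpart N α β := by
  have hq := qConv_nonneg_and_one_le_succ (one_le_cfA_succ hα)
  by_cases hk : k = 0
  · subst hk
    rw [dd_zero, inv_abs_rpow]
    exact rpow_neg_err_le_Zpart_of_mem_path (by rw [hpath]; exact conv_mem_node _ _) (hq m).2
  · rw [dd_of_ne_zero hk, inv_abs_rpow]
    refine rpow_neg_err_le_Zpart_of_mem_path (by rw [hpath]; exact interConv_mem_node _ _) ?_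
    have : (1 : ℤ) ≤ k := by exact_mod_cast Nat.one_le_iff_ne_zero.mpr hk
    simp only [interConv, prevConv, conv, Prod.snd_add, Prod.smul_snd, smul_eq_mul]
    nlinarith [hq m]

end DiophantinePartition

open DiophantinePartition

theorem stmt6 (β : ℝ) (hβ : 2 < β) :
    ∃ c : ℝ, 0 < c ∧ ∀ α : ℝ, 0 < α → Irrational α → ∀ N m k : ℕ,
      1 ≤ N → Nsum (cfA α) 0 ≤ (N : ℤ) →
      (N : ℤ) = Nsum (cfA α) m + (k : ℤ) → (k : ℤ) < cfA α (m + 1) →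
      dd α m k ^ β ≤ Zpart N α β ∧ Zpart N α β ≤ c * (N : ℝ) * dd α m 0 ^ β := by
  refine ⟨1 + pairRpowSum β, by linarith [pairRpowSum_nonneg β], ?_⟩
  intro α hα₀ hα N m k hN _ hNk hk
  have hNk' : N = cfSum α (m + 1) + k := by
    have := natCast_cfSum hα₀ hα m
    omega
  have hk' : k < (cfA α (m + 1)).toNat := by omega
  have hpath : path α N = node α (m + 1) k := hNk' ▸ path_cfSum_add hα₀ hα _ k hk'.le
  exact ⟨dd_rpow_le_Zpart hα β hpath, Zpart_le_mul_dd_rpow hα₀ hα hβ hN hNk' hk'⟩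
end

section
/- There exists a positive irrational real number α such that for every real number β > 2, the limit lim_{N→∞} (log Z_N(α;β))/N exists and equals 0; in particular, α has a 1-free energy limit. -/
/-!
Write `H_N(u, v) = ∑_σ |u p_σ + v q_σ|^{-β}`, so that `Z_N(α; β) = H_N(1, -α)`. Splitting off the
first letter gives `H_{N+1}(u, v) = H_N(u + v, v) + H_N(u, u + v)`. When `u, v > 0` the potential
`Φ(u, v) = v^{-β} + u^{1-β} / ((β - 2) v)` bounds `H_N(u, v)` uniformly in `N`, because
`Φ(u + v, v) + Φ(u, u + v) ≤ Φ(u, v)` (a tangent-line inequality for the convex `x ↦ x^{2-β}`).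
For a pair of opposite signs `(x, -y)` one child has equal signs and the other is, up to sign,
`(x, -y)` after a step of the subtractive Euclidean algorithm. Hence `Z_N ≤ (C N + 1) m^{-β}`,
where `m` bounds from below the entries and the differences of the first `N` pairs of the
subtractive Euclidean orbit of `(1, α)`; the word `A₀^N` alone gives `Z_N ≥ α^{-β} ≥ 1`.

Take `α = [0; 1, 2, 3, …]`. Its orbit visits the remainders `θ_n = |q_n α - p_n|` and, during its
first `1 + 2 + ⋯ + M ≈ M² / 2` steps, never goes below `θ_{M+1} ≥ 1 / (2 q_{M+2}) ≥ 1 / (2 (M+2)!)`.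
So `0 ≤ log Z_N = O(√N log N)`. The remainders never vanish, so `α` is irrational.
-/

namespace FreeEnergy

open Real Filter Topology

noncomputable section

section PartitionSum

def partitionSum (β : ℝ) (N : ℕ) (u v : ℝ) : ℝ :=
  ∑ σ : Fin N → Bool, |u * wordProd σ 0 1 + v * wordProd σ 1 1| ^ (-β)

lemma zpart_eq_partitionSum (N : ℕ) (α β : ℝ) : Zpart N α β = partitionSum β N 1 (-α) := by
  simp only [Zpart, partitionSum, one_mul, neg_mul, sub_eq_add_neg]

lemma wordProd_consEquiv {N : ℕ} (b : Bool) (σ : Fin N → Bool) :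
    wordProd (Fin.consEquiv (fun _ => Bool) (b, σ)) = (if b then A1 else A0) * wordProd σ := by
  simp [wordProd, List.ofFn_succ, Fin.consEquiv]

lemma partitionSum_zero (β u v : ℝ) : partitionSum β 0 u v = |v| ^ (-β) := by
  simp [partitionSum, wordProd]

lemma partitionSum_succ (β : ℝ) (N : ℕ) (u v : ℝ) :
    partitionSum β (N + 1) u v = partitionSum β N (u + v) v + partitionSum β N u (u + v) := by
  rw [partitionSum, ← (Fin.consEquiv fun _ => Bool).sum_comp, Fintype.sum_prod_type,
    Fintype.sum_bool, add_comm]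
  congr 1 <;> refine Finset.sum_congr rfl fun σ _ => ?_ <;>
    simp [wordProd_consEquiv, A0, A1, Matrix.mul_apply, Fin.sum_univ_two] <;> ring_nf

lemma partitionSum_neg (β : ℝ) (N : ℕ) (u v : ℝ) :
    partitionSum β N (-u) (-v) = partitionSum β N u v := by
  simp only [partitionSum, neg_mul, ← neg_add, abs_neg]

lemma partitionSum_nonneg (β : ℝ) (N : ℕ) (u v : ℝ) : 0 ≤ partitionSum β N u v :=
  Finset.sum_nonneg fun _ _ => rpow_nonneg (abs_nonneg _) _

lemma abs_rpow_neg_le_partitionSum (β : ℝ) (N : ℕ) :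
    ∀ u v : ℝ, |v| ^ (-β) ≤ partitionSum β N u v := by
  induction N with
  | zero => intro u v; rw [partitionSum_zero]
  | succ N ih =>
    intro u v
    rw [partitionSum_succ]
    linarith [ih (u + v) v, partitionSum_nonneg β N u (u + v)]

lemma zpart_pos {α : ℝ} (hα : α ≠ 0) (β : ℝ) (N : ℕ) : 0 < Zpart N α β := by
  rw [zpart_eq_partitionSum]
  exact (rpow_pos_of_pos (abs_pos.2 (neg_ne_zero.2 hα)) _).trans_le
    (abs_rpow_neg_le_partitionSum β N 1 (-α))

lemma one_le_zpart {α β : ℝ} (hα : 0 < α) (hα1 : α ≤ 1) (hβ : 0 ≤ β) (N : ℕ) :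
    1 ≤ Zpart N α β := by
  rw [zpart_eq_partitionSum]
  refine le_trans ?_ (abs_rpow_neg_le_partitionSum β N 1 (-α))
  rw [abs_neg, abs_of_pos hα]
  exact one_le_rpow_of_pos_of_le_one_of_nonpos hα hα1 (by linarith)

end PartitionSum

section Potential

lemma rpow_tangent_le {p u w : ℝ} (hp : p ≤ 0) (hu : 0 < u) (hw : 0 < w) :
    (1 - p * (1 - u / w)) * w ^ p ≤ u ^ p := by
  have hlog : p * (u / w - 1) ≤ p * log (u / w) :=
    mul_le_mul_of_nonpos_left (log_le_sub_one_of_pos (by positivity)) hp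
  have hexp : 1 - p * (1 - u / w) ≤ (u / w) ^ p := by
    rw [rpow_def_of_pos (by positivity)]
    linarith [add_one_le_exp (log (u / w) * p)]
  calc (1 - p * (1 - u / w)) * w ^ p ≤ (u / w) ^ p * w ^ p := by gcongr
    _ = u ^ p := by rw [div_rpow hu.le hw.le, div_mul_cancel₀ _ (by positivity)]

def potential (β u v : ℝ) : ℝ := v ^ (-β) + u ^ (1 - β) / ((β - 2) * v)

lemma rpow_neg_eq_div_sq {x : ℝ} (hx : 0 < x) (β : ℝ) : x ^ (-β) = x ^ (2 - β) / x ^ 2 := by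
  rw [show -β = (2 - β) - 2 by ring, rpow_sub hx, rpow_two]

lemma rpow_one_sub_eq_div {x : ℝ} (hx : 0 < x) (β : ℝ) : x ^ (1 - β) = x ^ (2 - β) / x := by
  rw [show 1 - β = (2 - β) - 1 by ring, rpow_sub hx, rpow_one]

lemma potential_add_le {β u v : ℝ} (hβ : 2 < β) (hu : 0 < u) (hv : 0 < v) :
    potential β (u + v) v + potential β u (u + v) ≤ potential β u v := by
  have hw : 0 < u + v := by linarith
  have hγ : 0 < β - 2 := by linarith
  have htangent := rpow_tangent_le (p := 2 - β) (by linarith) hu hw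
  have hdefect : potential β u v - (potential β (u + v) v + potential β u (u + v)) =
      (u ^ (2 - β) - (1 - (2 - β) * (1 - u / (u + v))) * (u + v) ^ (2 - β)) * (u + v)
        / ((β - 2) * v * (u + v) ^ 2) := by
    simp only [potential, rpow_neg_eq_div_sq hv, rpow_neg_eq_div_sq hw, rpow_one_sub_eq_div hu,
      rpow_one_sub_eq_div hw]
    field_simp
    ring
  have : 0 ≤ potential β u v - (potential β (u + v) v + potential β u (u + v)) := by
    rw [hdefect]
    exact div_nonneg (mul_nonneg (by linarith) hw.le) (by positivity)
  linarith

lemma potential_le {β m u v : ℝ} (hβ : 2 < β) (hm : 0 < m) (hmu : m ≤ u) (hmv : m ≤ v) :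
    potential β u v ≤ (1 + (β - 2)⁻¹) * m ^ (-β) := by
  have hγ : 0 < β - 2 := by linarith
  have hv : v ^ (-β) ≤ m ^ (-β) := rpow_le_rpow_of_nonpos hm hmv (by linarith)
  have hu : u ^ (1 - β) / ((β - 2) * v) ≤ m ^ (1 - β) / ((β - 2) * m) := by
    apply div_le_div₀ (by positivity) (rpow_le_rpow_of_nonpos hm hmu (by linarith)) (by positivity)
    gcongr
  have hm' : m ^ (1 - β) / ((β - 2) * m) = (β - 2)⁻¹ * m ^ (-β) := by
    rw [rpow_one_sub_eq_div hm, rpow_neg_eq_div_sq hm]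
    field_simp
  rw [potential]
  linarith

lemma partitionSum_le_potential {β : ℝ} (hβ : 2 < β) (N : ℕ) :
    ∀ {u v : ℝ}, 0 < u → 0 < v → partitionSum β N u v ≤ potential β u v := by
  induction N with
  | zero =>
    intro u v hu hv
    have : 0 < β - 2 := by linarith
    have : 0 < u ^ (1 - β) / ((β - 2) * v) := by positivity
    rw [partitionSum_zero, abs_of_pos hv, potential]
    linarith
  | succ N ih =>
    intro u v hu hv
    rw [partitionSum_succ]
    linarith [ih (add_pos hu hv) hv, ih hu (add_pos hu hv), potential_add_le hβ hu hv]

end Potential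

section EuclidOrbit

def euclidStep (p : ℝ × ℝ) : ℝ × ℝ :=
  if p.2 < p.1 then (p.1 - p.2, p.2) else (p.1, p.2 - p.1)

def IsSpread (m : ℝ) (p : ℝ × ℝ) : Prop :=
  m ≤ p.1 ∧ m ≤ p.2 ∧ m ≤ |p.1 - p.2|

lemma IsSpread.swap {m : ℝ} {p : ℝ × ℝ} (h : IsSpread m p) : IsSpread m p.swap :=
  ⟨h.2.1, h.1, abs_sub_comm p.1 p.2 ▸ h.2.2⟩

lemma euclidStep_eq_of_lt {x y : ℝ} (hyx : y < x) {p : ℝ × ℝ} (hp : p = (x, y) ∨ p = (y, x)) :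
    euclidStep p = (x - y, y) ∨ euclidStep p = (y, x - y) := by
  rcases hp with rfl | rfl
  · simp [euclidStep, hyx]
  · simp [euclidStep, hyx.not_gt]

lemma partitionSum_succ_le {β m : ℝ} (hβ : 2 < β) (hm : 0 < m) {p : ℝ × ℝ}
    (hp : IsSpread m p) (N : ℕ) :
    partitionSum β (N + 1) p.1 (-p.2) ≤
      partitionSum β N (euclidStep p).1 (-(euclidStep p).2) + (1 + (β - 2)⁻¹) * m ^ (-β) := by
  obtain ⟨x, y⟩ := p
  obtain ⟨hx, hy, hxy⟩ := hp
  dsimp only at hx hy hxy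
  rw [partitionSum_succ, ← sub_eq_add_neg]
  unfold euclidStep
  split_ifs with hlt <;> dsimp only
  · rw [abs_of_pos (sub_pos.2 hlt)] at hxy
    have := partitionSum_le_potential hβ N (by linarith : 0 < x) (by linarith : 0 < x - y)
    linarith [potential_le hβ hm hx hxy]
  · rw [abs_sub_comm, abs_of_nonneg (by linarith)] at hxy
    rw [show x - y = -(y - x) by ring, partitionSum_neg β N (y - x) y, add_comm]
    have := partitionSum_le_potential hβ N (by linarith : 0 < y - x) (by linarith : 0 < y)
    gcongr
    linarith [potential_le hβ hm hxy hy]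

lemma partitionSum_le_of_isSpread {β m : ℝ} (hβ : 2 < β) (hm : 0 < m) (N : ℕ) :
    ∀ p : ℝ × ℝ, (∀ k ≤ N, IsSpread m (euclidStep^[k] p)) →
      partitionSum β N p.1 (-p.2) ≤ ((1 + (β - 2)⁻¹) * N + 1) * m ^ (-β) := by
  induction N with
  | zero =>
    intro p hp
    obtain ⟨-, hy, -⟩ := hp 0 le_rfl
    dsimp only [Function.iterate_zero, id] at hy
    rw [partitionSum_zero, abs_neg, abs_of_pos (hm.trans_le hy)]
    simpa using rpow_le_rpow_of_nonpos hm hy (by linarith)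
  | succ N ih =>
    intro p hp
    have hstep := ih (euclidStep p) fun k hk => by
      simpa only [← Function.iterate_succ_apply] using hp (k + 1) (by omega)
    have := partitionSum_succ_le hβ hm (hp 0 (Nat.zero_le _)) N
    dsimp only [Function.iterate_zero, id] at this
    push_cast
    linarith

end EuclidOrbit

section Convergents

variable {a : ℕ → ℤ}

lemma qConv_add_two (a : ℕ → ℤ) (n : ℕ) :
    qConv a (n + 2) = a (n + 1) * qConv a (n + 1) + qConv a n := rfl

lemma qConv_nonneg_and_one_le (ha : ∀ n, 1 ≤ a (n + 1)) (n : ℕ) :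
    0 ≤ qConv a n ∧ 1 ≤ qConv a (n + 1) := by
  induction n with
  | zero => simp [qConv]
  | succ n ih =>
    refine ⟨zero_le_one.trans ih.2, ?_⟩
    rw [qConv_add_two]
    nlinarith [ha n, ih.1, ih.2]

lemma qConv_nonneg (ha : ∀ n, 1 ≤ a (n + 1)) (n : ℕ) : 0 ≤ qConv a n :=
  (qConv_nonneg_and_one_le ha n).1

lemma one_le_qConv (ha : ∀ n, 1 ≤ a (n + 1)) (n : ℕ) : 1 ≤ qConv a (n + 1) :=
  (qConv_nonneg_and_one_le ha n).2

lemma qConv_pos (ha : ∀ n, 1 ≤ a (n + 1)) (n : ℕ) : (0 : ℝ) < qConv a (n + 1) := by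
  exact_mod_cast (one_le_qConv ha n).trans_lt' one_pos

lemma qConv_add_le_qConv (ha : ∀ n, 1 ≤ a (n + 1)) (n : ℕ) :
    qConv a (n + 1) + qConv a n ≤ qConv a (n + 2) := by
  rw [qConv_add_two]
  nlinarith [ha n, one_le_qConv ha n]

lemma two_pow_le_qConv_mul (ha : ∀ n, 1 ≤ a (n + 1)) (n : ℕ) :
    2 ^ n ≤ qConv a (n + 1) * qConv a (n + 2) := by
  induction n with
  | zero => simpa [qConv] using ha 0
  | succ n ih =>
    have h3 : qConv a (n + 2) + qConv a (n + 1) ≤ qConv a (n + 3) := qConv_add_le_qConv ha (n + 1)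
    have h2 := qConv_add_le_qConv ha n
    have h1 := one_le_qConv ha (n + 1)
    have h0 := qConv_nonneg ha n
    calc (2 : ℤ) ^ (n + 1) ≤ 2 * (qConv a (n + 1) * qConv a (n + 2)) := by rw [pow_succ]; linarith
      _ ≤ qConv a (n + 2) * qConv a (n + 3) := by nlinarith

lemma nsum_succ (a : ℕ → ℤ) (m : ℕ) : Nsum a (m + 1) = Nsum a m + a (m + 1) :=
  Finset.sum_range_succ a (m + 1)

lemma nsum_mono (ha : ∀ n, 1 ≤ a (n + 1)) : Monotone (Nsum a) :=
  monotone_nat_of_le_succ fun m => by rw [nsum_succ]; linarith [ha m]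

end Convergents

section Remainders

/-- `θ n` plays the role of `|q_n α - p_n|` for the real number `α = θ 1` whose partial quotients
are `a 1, a 2, …`; the indexing follows `pConv` and `qConv`. -/
structure IsRemainderSeq (a : ℕ → ℤ) (θ : ℕ → ℝ) : Prop where
  zero : θ 0 = 1
  pos : ∀ n, 0 < θ n
  add_two : ∀ n, θ (n + 2) = θ n - a (n + 1) * θ (n + 1)

variable {a : ℕ → ℤ} {θ : ℕ → ℝ}

lemma qConv_mul_add_qConv_mul_eq_one (hθ0 : θ 0 = 1)
    (hrec : ∀ n, θ (n + 2) = θ n - a (n + 1) * θ (n + 1)) (n : ℕ) :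
    qConv a (n + 1) * θ n + qConv a n * θ (n + 1) = 1 := by
  induction n with
  | zero => simp [qConv, hθ0]
  | succ n ih =>
    rw [qConv_add_two, hrec]
    push_cast
    linear_combination ih

namespace IsRemainderSeq

lemma strictAnti (hθ : IsRemainderSeq a θ) (ha : ∀ n, 1 ≤ a (n + 1)) : StrictAnti θ :=
  strictAnti_nat_of_succ_lt fun n => by
    have : (1 : ℝ) ≤ a (n + 1) := by exact_mod_cast ha n
    nlinarith [hθ.pos n, hθ.pos (n + 1), hθ.pos (n + 2), hθ.add_two n]

lemma inv_two_mul_qConv_le (hθ : IsRemainderSeq a θ) (ha : ∀ n, 1 ≤ a (n + 1)) (n : ℕ) :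
    (2 * (qConv a (n + 2) : ℝ))⁻¹ ≤ θ (n + 1) := by
  have hid := qConv_mul_add_qConv_mul_eq_one hθ.zero hθ.add_two (n + 1)
  have hθle : θ (n + 2) ≤ θ (n + 1) := (hθ.strictAnti ha).antitone (by omega)
  have hQ : (qConv a (n + 1) : ℝ) ≤ qConv a (n + 2) := by
    exact_mod_cast (qConv_add_le_qConv ha n).trans' (by linarith [qConv_nonneg ha n])
  have hQ0 : (0 : ℝ) ≤ qConv a (n + 1) := by exact_mod_cast qConv_nonneg ha (n + 1)
  have hQ1 := qConv_pos ha (n + 1)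
  rw [inv_le_iff_one_le_mul₀ (by positivity)]
  nlinarith [hθ.pos (n + 2)]

/-- If `θ 1 = p / d`, then `d θ n` is a strictly decreasing sequence of positive integers. -/
lemma irrational (hθ : IsRemainderSeq a θ) (ha : ∀ n, 1 ≤ a (n + 1)) : Irrational (θ 1) := by
  rintro ⟨x, hx⟩
  have hint : ∀ n, (∃ z : ℤ, x.den * θ n = z) ∧ ∃ z : ℤ, x.den * θ (n + 1) = z := by
    intro n
    induction n with
    | zero =>
      refine ⟨⟨x.den, by simp [hθ.zero]⟩, ⟨x.num, ?_⟩⟩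
      rw [← hx, ← Rat.cast_natCast, ← Rat.cast_mul, mul_comm, Rat.mul_den_eq_num,
        Rat.cast_intCast]
    | succ n ih =>
      obtain ⟨⟨z₀, h₀⟩, ⟨z₁, h₁⟩⟩ := ih
      refine ⟨⟨z₁, h₁⟩, ⟨z₀ - a (n + 1) * z₁, ?_⟩⟩
      rw [hθ.add_two]
      push_cast
      linear_combination h₀ - (a (n + 1) : ℝ) * h₁
  have hden : (0 : ℝ) < x.den := by exact_mod_cast x.pos
  have hdesc : ∀ n : ℕ, x.den * θ n ≤ x.den - n := by
    intro n
    induction n with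
    | zero => simp [hθ.zero]
    | succ n ih =>
      obtain ⟨⟨z₀, h₀⟩, ⟨z₁, h₁⟩⟩ := hint n
      have hlt : x.den * θ (n + 1) < x.den * θ n :=
        mul_lt_mul_of_pos_left (hθ.strictAnti ha n.lt_succ_self) hden
      rw [h₀, h₁] at hlt
      have : (z₁ : ℝ) ≤ z₀ - 1 := by exact_mod_cast Int.le_sub_one_of_lt (by exact_mod_cast hlt)
      push_cast
      linarith
  linarith [hdesc x.den, mul_pos hden (hθ.pos x.den)]

lemma add_le_sub_mul_of_lt (hθ : IsRemainderSeq a θ) {m j : ℕ} (hj : (j : ℤ) < a (m + 1)) :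
    θ (m + 1) + θ (m + 2) ≤ θ m - j * θ (m + 1) := by
  have : (j : ℝ) + 1 ≤ a (m + 1) := by exact_mod_cast hj
  nlinarith [hθ.pos (m + 1), hθ.add_two m]

lemma euclidStep_iterate_eq (hθ : IsRemainderSeq a θ) (ha0 : a 0 = 0)
    (ha : ∀ n, 1 ≤ a (n + 1)) (k : ℕ) :
    ∃ m j : ℕ, (j : ℤ) < a (m + 1) ∧ (k : ℤ) = Nsum a m + j ∧
      (euclidStep^[k] (θ 0, θ 1) = (θ m - j * θ (m + 1), θ (m + 1)) ∨
        euclidStep^[k] (θ 0, θ 1) = (θ (m + 1), θ m - j * θ (m + 1))) := by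
  induction k with
  | zero => exact ⟨0, 0, by push_cast; linarith [ha 0], by simp [Nsum, ha0], by simp⟩
  | succ k ih =>
    obtain ⟨m, j, hj, hk, hp⟩ := ih
    have hlt : θ (m + 1) < θ m - j * θ (m + 1) := by
      linarith [hθ.add_le_sub_mul_of_lt hj, hθ.pos (m + 2)]
    have hstep := euclidStep_eq_of_lt hlt hp
    rw [Function.iterate_succ_apply']
    rcases (Int.add_one_le_of_lt hj).lt_or_eq with hj1 | hj1
    · refine ⟨m, j + 1, by exact_mod_cast hj1, by push_cast; omega, ?_⟩
      convert hstep using 3 <;> push_cast <;> ring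
    · have hrem : θ m - j * θ (m + 1) - θ (m + 1) = θ (m + 2) := by
        rw [hθ.add_two, ← hj1]; push_cast; ring
      refine ⟨m + 1, 0, by push_cast; linarith [ha (m + 1)], by rw [nsum_succ]; push_cast; omega,
        ?_⟩
      rw [hrem] at hstep
      simpa [or_comm] using hstep

lemma isSpread_euclidStep_iterate (hθ : IsRemainderSeq a θ) (ha0 : a 0 = 0)
    (ha : ∀ n, 1 ≤ a (n + 1)) {k M : ℕ} (hk : (k : ℤ) < Nsum a M) :
    IsSpread (θ (M + 1)) (euclidStep^[k] (θ 0, θ 1)) := by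
  obtain ⟨m, j, hj, hkm, hp⟩ := hθ.euclidStep_iterate_eq ha0 ha k
  have hmM : m < M := by
    by_contra! h
    linarith [nsum_mono ha h, (Nat.cast_nonneg j : (0 : ℤ) ≤ j)]
  have anti := (hθ.strictAnti ha).antitone
  have h1 : θ (M + 1) ≤ θ (m + 1) := anti (by omega)
  have h2 : θ (M + 1) ≤ θ (m + 2) := anti (by omega)
  have hbig := hθ.add_le_sub_mul_of_lt hj
  have := hθ.pos (m + 2)
  have hspread : IsSpread (θ (M + 1)) (θ m - j * θ (m + 1), θ (m + 1)) :=
    ⟨by dsimp only; linarith, h1, by dsimp only; rw [abs_of_nonneg (by linarith)]; linarith⟩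
  rcases hp with hp | hp <;> rw [hp]
  exacts [hspread, hspread.swap]

lemma zpart_le_of_lt_nsum (hθ : IsRemainderSeq a θ) (ha0 : a 0 = 0) (ha : ∀ n, 1 ≤ a (n + 1))
    {β : ℝ} (hβ : 2 < β) {N M : ℕ} (hNM : (N : ℤ) < Nsum a M) :
    Zpart N (θ 1) β ≤ ((1 + (β - 2)⁻¹) * N + 1) * (2 * qConv a (M + 2)) ^ β := by
  have hQ := qConv_pos ha (M + 1)
  have hθM : θ (M + 1) ^ (-β) ≤ (2 * qConv a (M + 2) : ℝ) ^ β := by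
    calc θ (M + 1) ^ (-β) ≤ (2 * qConv a (M + 2) : ℝ)⁻¹ ^ (-β) :=
          rpow_le_rpow_of_nonpos (by positivity) (hθ.inv_two_mul_qConv_le ha M) (by linarith)
      _ = _ := by rw [inv_rpow (by positivity), rpow_neg (by positivity), inv_inv]
  calc Zpart N (θ 1) β = partitionSum β N (θ 0, θ 1).1 (-(θ 0, θ 1).2) := by
        rw [zpart_eq_partitionSum, hθ.zero]
    _ ≤ ((1 + (β - 2)⁻¹) * N + 1) * θ (M + 1) ^ (-β) :=
        partitionSum_le_of_isSpread hβ (hθ.pos _) N _ fun k hk =>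
          hθ.isSpread_euclidStep_iterate ha0 ha (by omega)
    _ ≤ _ := by gcongr

end IsRemainderSeq

end Remainders

section Existence

variable {a : ℕ → ℤ}

def cfWeight (a : ℕ → ℤ) (j : ℕ) : ℝ := ((qConv a (j + 1) * qConv a (j + 2) : ℤ) : ℝ)⁻¹

def cfTail (a : ℕ → ℤ) (n : ℕ) : ℝ := ∑' j, (-1) ^ j * cfWeight a (j + n)

/-- For `α = ∑_j (-1)^j / (q_{j+1} q_{j+2})`, the remainder `q_{n+1} |α - p_{n+1} / q_{n+1}|`
written as a tail of this alternating series. -/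
def cfRemainder (a : ℕ → ℤ) : ℕ → ℝ
  | 0 => 1
  | n + 1 => qConv a (n + 1) * cfTail a n

lemma cfWeight_pos (ha : ∀ n, 1 ≤ a (n + 1)) (j : ℕ) : 0 < cfWeight a j := by
  have : (0 : ℝ) < ((qConv a (j + 1) * qConv a (j + 2) : ℤ) : ℝ) := by
    exact_mod_cast (two_pow_le_qConv_mul ha j).trans_lt' (by positivity)
  exact inv_pos.2 this

lemma cfWeight_strictAnti (ha : ∀ n, 1 ≤ a (n + 1)) : StrictAnti (cfWeight a) := by
  refine strictAnti_nat_of_succ_lt fun j => inv_strictAnti₀ ?_ ?_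
  · exact_mod_cast (two_pow_le_qConv_mul ha j).trans_lt' (by positivity)
  · have h := qConv_add_le_qConv ha (j + 1)
    have h1 := one_le_qConv ha j
    have h2 := one_le_qConv ha (j + 1)
    have : qConv a (j + 1) * qConv a (j + 2) < qConv a (j + 2) * qConv a (j + 3) := by nlinarith
    push_cast
    exact_mod_cast this

lemma summable_cfWeight (ha : ∀ n, 1 ≤ a (n + 1)) : Summable (cfWeight a) := by
  refine summable_geometric_two.of_nonneg_of_le (fun j => (cfWeight_pos ha j).le) fun j => ?_
  rw [cfWeight, one_div, inv_pow]
  exact inv_anti₀ (by positivity) (by exact_mod_cast two_pow_le_qConv_mul ha j)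

lemma cfTail_eq_sub (ha : ∀ n, 1 ≤ a (n + 1)) (n : ℕ) :
    cfTail a n = cfWeight a n - cfTail a (n + 1) := by
  have hs : Summable fun j => (-1 : ℝ) ^ j * cfWeight a (j + n) :=
    ((summable_nat_add_iff n).2 (summable_cfWeight ha)).alternating
  rw [cfTail, hs.tsum_eq_zero_add, cfTail, sub_eq_add_neg, ← tsum_neg]
  congr 1
  · simp
  · exact tsum_congr fun j => by rw [show j + 1 + n = j + (n + 1) by ring]; ring

lemma cfTail_pos (ha : ∀ n, 1 ≤ a (n + 1)) (n : ℕ) : 0 < cfTail a n := by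
  have anti : Antitone fun j => cfWeight a (j + n) :=
    (cfWeight_strictAnti ha).antitone.comp_monotone fun _ _ h => by omega
  have hle := anti.alternating_series_le_tendsto
    ((summable_nat_add_iff n).2 (summable_cfWeight ha)).tendsto_alternating_series_tsum 1
  have hlt : cfWeight a (1 + n) < cfWeight a n := cfWeight_strictAnti ha (by omega)
  simp only [mul_one, Finset.sum_range_succ, Finset.sum_range_zero] at hle
  norm_num at hle
  rw [cfTail]
  linarith

lemma isRemainderSeq_cfRemainder (ha : ∀ n, 1 ≤ a (n + 1)) :
    IsRemainderSeq a (cfRemainder a) where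
  zero := rfl
  pos n := by
    cases n with
    | zero => exact one_pos
    | succ n => exact mul_pos (qConv_pos ha n) (cfTail_pos ha n)
  add_two n := by
    cases n with
    | zero =>
      have : (a 1 : ℝ) ≠ 0 := by exact_mod_cast (zero_lt_one.trans_le (ha 0)).ne'
      simp only [cfRemainder]
      rw [cfTail_eq_sub ha 0, cfWeight]
      simp [qConv]
      field_simp
      ring
    | succ n =>
      have := (qConv_pos ha n).ne'
      have := (qConv_pos ha (n + 1)).ne'
      have := (qConv_pos ha (n + 2)).ne'
      have hq : (qConv a (n + 3) : ℝ) = a (n + 2) * qConv a (n + 2) + qConv a (n + 1) := by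
        exact_mod_cast qConv_add_two a (n + 1)
      show (qConv a (n + 3) : ℝ) * cfTail a (n + 2) =
        qConv a (n + 1) * cfTail a n - a (n + 2) * (qConv a (n + 2) * cfTail a (n + 1))
      rw [cfTail_eq_sub ha n, cfTail_eq_sub ha (n + 1), cfWeight, cfWeight]
      push_cast
      field_simp
      rw [hq]
      ring

end Existence

section NaturalPartialQuotients

lemma qConv_natCast_le_factorial (n : ℕ) : qConv Nat.cast n ≤ (n.factorial : ℤ) := by
  induction n using Nat.strong_induction_on with
  | _ n ih =>
    match n with
    | 0 => simp [qConv]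
    | 1 => simp [qConv]
    | n + 2 =>
      rw [qConv_add_two, Nat.factorial_succ, Nat.factorial_succ]
      have h1 := ih (n + 1) (by omega)
      have h0 := ih n (by omega)
      rw [Nat.factorial_succ] at h1
      push_cast at h1 ⊢
      nlinarith [Nat.factorial_pos n]

lemma two_mul_qConv_natCast_le (n : ℕ) :
    2 * qConv Nat.cast (n + 2) ≤ ((n + 3 : ℕ) : ℤ) ^ (n + 3) := by
  have h := qConv_natCast_le_factorial (n + 2)
  have hf : (n + 3).factorial ≤ (n + 3) ^ (n + 3) := Nat.factorial_le_pow _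
  rw [Nat.factorial_succ] at hf
  have : (2 : ℤ) * (n + 2).factorial ≤ (n + 3) * (n + 2).factorial := by
    gcongr
    omega
  push_cast at hf ⊢
  linarith

lemma nsum_natCast_mul_two (M : ℕ) : Nsum Nat.cast M * 2 = ((M : ℤ) + 1) * M := by
  have h := Finset.sum_range_id_mul_two (M + 1)
  rw [Nat.add_sub_cancel] at h
  have hcast : Nsum Nat.cast M = ((∑ i ∈ Finset.range (M + 1), i : ℕ) : ℤ) := by
    rw [Nsum, Nat.cast_sum]
  rw [hcast]
  exact_mod_cast h

lemma lt_nsum_natCast_two_mul_sqrt (N : ℕ) : (N : ℤ) < Nsum Nat.cast (2 * N.sqrt + 1) := by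
  have h2 := nsum_natCast_mul_two (2 * N.sqrt + 1)
  have : (N : ℤ) < (N.sqrt + 1) * (N.sqrt + 1) := by exact_mod_cast Nat.lt_succ_sqrt N
  push_cast at h2
  nlinarith

lemma log_two_mul_qConv_natCast_le {N : ℕ} (hN : 1 ≤ N) :
    log (2 * qConv Nat.cast (2 * N.sqrt + 1 + 2)) ≤ 6 * (√N * log (6 * √N)) := by
  have hQ : (2 * qConv Nat.cast (2 * N.sqrt + 1 + 2) : ℝ) ≤
      ((2 * N.sqrt + 4 : ℕ) : ℝ) ^ (2 * N.sqrt + 4) := by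
    exact_mod_cast two_mul_qConv_natCast_le (2 * N.sqrt + 1)
  have hQ0 := qConv_pos (a := Nat.cast) (fun n => by omega) (2 * N.sqrt + 2)
  have hs : (1 : ℝ) ≤ √N := one_le_sqrt.2 (by exact_mod_cast hN)
  have hM : ((2 * N.sqrt + 4 : ℕ) : ℝ) ≤ 6 * √N := by
    push_cast
    linarith [nat_sqrt_le_real_sqrt (a := N)]
  calc log (2 * qConv Nat.cast (2 * N.sqrt + 1 + 2))
      ≤ log (((2 * N.sqrt + 4 : ℕ) : ℝ) ^ (2 * N.sqrt + 4)) := log_le_log (by positivity) hQ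
    _ = ((2 * N.sqrt + 4 : ℕ) : ℝ) * log ((2 * N.sqrt + 4 : ℕ) : ℝ) := log_pow _ _
    _ ≤ 6 * √N * log (6 * √N) := by gcongr
    _ = 6 * (√N * log (6 * √N)) := by ring

lemma log_zpart_le {θ : ℕ → ℝ} (hθ : IsRemainderSeq Nat.cast θ) {β : ℝ} (hβ : 2 < β) {N : ℕ}
    (hN : 1 ≤ N) :
    log (Zpart N (θ 1) β) ≤ log (2 + (β - 2)⁻¹) + log N + 6 * β * (√N * log (6 * √N)) := by
  have hZ := hθ.zpart_le_of_lt_nsum (by simp) (fun n => by omega) hβ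
    (lt_nsum_natCast_two_mul_sqrt N)
  have hc : 0 < (β - 2)⁻¹ := inv_pos.2 (by linarith)
  have hN' : (1 : ℝ) ≤ N := by exact_mod_cast hN
  have hQ := qConv_pos (a := Nat.cast) (fun n => by omega) (2 * N.sqrt + 2)
  have hlin : (1 + (β - 2)⁻¹) * N + 1 ≤ (2 + (β - 2)⁻¹) * N := by nlinarith
  calc log (Zpart N (θ 1) β)
      ≤ log (((1 + (β - 2)⁻¹) * N + 1) * (2 * qConv Nat.cast (2 * N.sqrt + 1 + 2)) ^ β) :=
        log_le_log (zpart_pos (hθ.pos 1).ne' β N) hZ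
    _ = log ((1 + (β - 2)⁻¹) * N + 1) + β * log (2 * qConv Nat.cast (2 * N.sqrt + 1 + 2)) := by
        rw [log_mul (by positivity) (by positivity), log_rpow (by positivity)]
    _ ≤ log ((2 + (β - 2)⁻¹) * N) + β * (6 * (√N * log (6 * √N))) := by
        gcongr
        exact log_two_mul_qConv_natCast_le hN
    _ = _ := by rw [log_mul (by positivity) (by positivity)]; ring

end NaturalPartialQuotients

lemma tendsto_log_div_self : Tendsto (fun x : ℝ => log x / x) atTop (𝓝 0) := by
  simpa using tendsto_pow_log_div_mul_add_atTop 1 0 1 one_ne_zero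

lemma tendsto_add_log_add_sqrt_mul_log_div (K L : ℝ) :
    Tendsto (fun x : ℝ => (K + log x + L * (√x * log (6 * √x))) / x) atTop (𝓝 0) := by
  have h6 : Tendsto (fun x : ℝ => 6 * √x) atTop atTop :=
    tendsto_sqrt_atTop.const_mul_atTop (by norm_num)
  have hlim := ((tendsto_const_nhds (x := K)).div_atTop tendsto_id).add tendsto_log_div_self
    |>.add ((tendsto_log_div_self.comp h6).const_mul (6 * L))
  simp only [mul_zero, add_zero] at hlim
  refine hlim.congr' ?_
  filter_upwards [eventually_gt_atTop 0] with x hx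
  have hs : 0 < √x := sqrt_pos.2 hx
  have hsq : √x * √x = x := mul_self_sqrt hx.le
  simp only [Function.comp, id]
  field_simp
  linear_combination (-(L * log (6 * √x))) * hsq

end

end FreeEnergy

open FreeEnergy Real Filter in
theorem stmt7 :
    ∃ α : ℝ, 0 < α ∧ Irrational α ∧ ∀ β : ℝ, 2 < β →
      Filter.Tendsto (fun N : ℕ => Real.log (Zpart N α β) / (N : ℝ))
        Filter.atTop (nhds 0) := by
  have ha : ∀ n, 1 ≤ ((n + 1 : ℕ) : ℤ) := fun n => by omega
  have hθ := isRemainderSeq_cfRemainder ha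
  have hθ1 : cfRemainder Nat.cast 1 ≤ 1 := hθ.zero ▸ (hθ.strictAnti ha).antitone (Nat.zero_le 1)
  refine ⟨cfRemainder Nat.cast 1, hθ.pos 1, hθ.irrational ha, fun β hβ => ?_⟩
  refine tendsto_of_tendsto_of_tendsto_of_le_of_le' tendsto_const_nhds
    ((tendsto_add_log_add_sqrt_mul_log_div (log (2 + (β - 2)⁻¹)) (6 * β)).comp
      tendsto_natCast_atTop_atTop) ?_ ?_
  · exact Eventually.of_forall fun N =>
      div_nonneg (log_nonneg (one_le_zpart (hθ.pos 1) hθ1 (by linarith) N)) N.cast_nonneg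
  · filter_upwards [eventually_ge_atTop 1] with N hN
    exact div_le_div_of_nonneg_right (log_zpart_le hθ hβ hN) N.cast_nonneg
end

section
/- There exists a positive irrational real number α such that for every real number β > 0, the sequence N ↦ (log Z_N(α;β))/N is unbounded above; in particular, for every β > 0 the limit lim_{N→∞} (log Z_N(α;β))/N does not exist, so α has no 1-free energy limit. -/
/-!
Take `α` with continued fraction coefficients `a₀ = 1`, `a_{m+1} = 2 ^ ((m+1) N_m + 1)`, where
`N_m = a₀ + ⋯ + a_m`. The word `A₁^{a₀} A₀^{a₁} ⋯ A₁^{a_{2k}}` of length `N_{2k}` has right column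
`(p_{2k}, q_{2k})`, a convergent of `α`, so `|p_{2k} - α q_{2k}| ≤ 2 / q_{2k+1} ≤ 2 / a_{2k+1}`,
which is `2 ^ (-(2k+1) N_{2k})`. This single term of `Z_N` already gives
`log Z_N / N ≥ β (2k+1) log 2` at `N = N_{2k}`.

Irrationality: were `α = r/s`, the integers `s p_m - r q_m` would have absolute value
`≤ 2s / q_{m+1} < 1` for large `m`, so `α` would equal two consecutive convergents,
which are distinct.
-/

open Filter Topology

section Convergents

variable {a : ℕ → ℤ}

theorem pConv_add_two (a : ℕ → ℤ) (n : ℕ) :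
    pConv a (n + 2) = a (n + 1) * pConv a (n + 1) + pConv a n := rfl

theorem qConv_add_two (a : ℕ → ℤ) (n : ℕ) :
    qConv a (n + 2) = a (n + 1) * qConv a (n + 1) + qConv a n := rfl

theorem pConv_mul_qConv_sub_pConv_mul_qConv (a : ℕ → ℤ) (n : ℕ) :
    pConv a (n + 1) * qConv a n - pConv a n * qConv a (n + 1) = (-1) ^ (n + 1) := by
  induction n with
  | zero => simp [pConv, qConv]
  | succ n ih =>
    rw [pConv_add_two, qConv_add_two]
    linear_combination -ih

theorem qConv_pos (ha : ∀ n, 1 ≤ a (n + 1)) (n : ℕ) : 0 < qConv a (n + 1) := by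
  suffices ∀ n, 0 ≤ qConv a n ∧ 0 < qConv a (n + 1) from (this n).2
  intro n
  induction n with
  | zero => simp [qConv]
  | succ n ih =>
    refine ⟨ih.2.le, ?_⟩
    rw [qConv_add_two]
    nlinarith [ha n]

theorem qConv_nonneg (ha : ∀ n, 1 ≤ a (n + 1)) : ∀ n, 0 ≤ qConv a n
  | 0 => le_rfl
  | n + 1 => (qConv_pos ha n).le

theorem le_qConv_add_two (ha : ∀ n, 1 ≤ a (n + 1)) (n : ℕ) :
    a (n + 1) ≤ qConv a (n + 2) := by
  rw [qConv_add_two]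
  nlinarith [ha n, qConv_pos ha n, qConv_nonneg ha n]

theorem cast_qConv_pos (ha : ∀ n, 1 ≤ a (n + 1)) (n : ℕ) : (0 : ℝ) < qConv a (n + 1) :=
  Int.cast_pos.mpr (qConv_pos ha n)

theorem two_mul_qConv_le (ha : ∀ n, 2 ≤ a (n + 1)) (n : ℕ) :
    2 * qConv a (n + 1) ≤ qConv a (n + 2) := by
  have ha₁ : ∀ n, 1 ≤ a (n + 1) := fun n ↦ one_le_two.trans (ha n)
  rw [qConv_add_two]
  nlinarith [ha n, qConv_pos ha₁ n, qConv_nonneg ha₁ n]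

theorem two_pow_mul_qConv_le (ha : ∀ n, 2 ≤ a (n + 1)) (n k : ℕ) :
    2 ^ k * qConv a (n + 1) ≤ qConv a (n + k + 1) := by
  induction k with
  | zero => simp
  | succ k ih =>
    calc 2 ^ (k + 1) * qConv a (n + 1) = 2 * (2 ^ k * qConv a (n + 1)) := by ring
      _ ≤ 2 * qConv a (n + k + 1) := by linarith
      _ ≤ qConv a (n + k + 2) := two_mul_qConv_le ha (n + k)

theorem two_pow_le_qConv (ha : ∀ n, 2 ≤ a (n + 1)) (n : ℕ) : 2 ^ n ≤ qConv a (n + 1) := by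
  have := two_pow_mul_qConv_le ha 0 n
  rwa [show qConv a (0 + 1) = 1 from rfl, mul_one, zero_add] at this

noncomputable def cfConvergent (a : ℕ → ℤ) (n : ℕ) : ℝ :=
  pConv a (n + 1) / qConv a (n + 1)

theorem cfConvergent_succ_sub (ha : ∀ n, 1 ≤ a (n + 1)) (n : ℕ) :
    cfConvergent a (n + 1) - cfConvergent a n =
      (-1) ^ n / ((qConv a (n + 1) : ℝ) * qConv a (n + 2)) := by
  have h₁ := (cast_qConv_pos ha n).ne'
  have h₂ := (cast_qConv_pos ha (n + 1)).ne'
  have hdet : (pConv a (n + 2) : ℝ) * qConv a (n + 1) - pConv a (n + 1) * qConv a (n + 2) =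
      (-1) ^ n := by
    have := pConv_mul_qConv_sub_pConv_mul_qConv a (n + 1)
    rw [pow_add, pow_add] at this
    norm_num at this
    exact_mod_cast this
  rw [cfConvergent, cfConvergent, div_sub_div _ _ h₂ h₁, ← hdet]
  ring

theorem dist_cfConvergent_succ_le (ha : ∀ n, 2 ≤ a (n + 1)) (m k : ℕ) :
    dist (cfConvergent a (m + k)) (cfConvergent a (m + k + 1)) ≤
      1 / ((qConv a (m + 1) : ℝ) * qConv a (m + 2)) * (1 / 4) ^ k := by
  have hq := cast_qConv_pos fun n ↦ one_le_two.trans (ha n)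
  have h₁ : (2 : ℝ) ^ k * qConv a (m + 1) ≤ qConv a (m + k + 1) := by
    exact_mod_cast two_pow_mul_qConv_le ha m k
  have h₂ : (2 : ℝ) ^ k * qConv a (m + 2) ≤ qConv a (m + k + 2) := by
    have := two_pow_mul_qConv_le ha (m + 1) k
    rw [show m + 1 + k + 1 = m + k + 2 by omega] at this
    exact_mod_cast this
  rw [dist_comm, Real.dist_eq, cfConvergent_succ_sub (fun n ↦ one_le_two.trans (ha n)),
    abs_div, abs_pow, abs_neg, abs_one, one_pow, abs_of_pos (mul_pos (hq _) (hq _)),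
    one_div_mul_eq_div, div_pow, one_pow, div_div]
  refine one_div_le_one_div_of_le (mul_pos (by positivity) (mul_pos (hq _) (hq _))) ?_
  calc 4 ^ k * ((qConv a (m + 1) : ℝ) * qConv a (m + 2))
      = (2 ^ k * qConv a (m + 1)) * (2 ^ k * qConv a (m + 2)) := by
        rw [show (4 : ℝ) ^ k = 2 ^ k * 2 ^ k by rw [← mul_pow]; norm_num]; ring
    _ ≤ qConv a (m + k + 1) * qConv a (m + k + 2) :=
        mul_le_mul h₁ h₂ (mul_pos (by positivity) (hq _)).le (hq _).le

theorem cauchySeq_cfConvergent (ha : ∀ n, 2 ≤ a (n + 1)) : CauchySeq (cfConvergent a) :=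
  cauchySeq_of_le_geometric (1 / 4) (1 / ((qConv a 1 : ℝ) * qConv a 2)) (by norm_num) fun k ↦ by
    simpa only [zero_add] using dist_cfConvergent_succ_le ha 0 k

noncomputable def cfLimit (a : ℕ → ℤ) : ℝ := limUnder atTop (cfConvergent a)

theorem tendsto_cfConvergent (ha : ∀ n, 2 ≤ a (n + 1)) :
    Tendsto (cfConvergent a) atTop (𝓝 (cfLimit a)) :=
  (cauchySeq_cfConvergent ha).tendsto_limUnder

theorem abs_cfLimit_sub_cfConvergent_le (ha : ∀ n, 2 ≤ a (n + 1)) (m : ℕ) :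
    |cfLimit a - cfConvergent a m| ≤ 2 / ((qConv a (m + 1) : ℝ) * qConv a (m + 2)) := by
  have htail : Tendsto (fun k ↦ cfConvergent a (m + k)) atTop (𝓝 (cfLimit a)) :=
    (tendsto_cfConvergent ha).comp (tendsto_add_atTop_nat m) |>.congr fun k ↦ by simp [add_comm]
  have := dist_le_of_le_geometric_of_tendsto₀ _ _ (by norm_num)
    (dist_cfConvergent_succ_le ha m) htail
  rw [add_zero, dist_comm, Real.dist_eq] at this
  have hq := cast_qConv_pos fun n ↦ one_le_two.trans (ha n)
  set D : ℝ := (qConv a (m + 1) : ℝ) * qConv a (m + 2)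
  have hD : 0 < 1 / D := one_div_pos.mpr (mul_pos (hq m) (hq (m + 1)))
  linarith [show 2 / D = 2 * (1 / D) by ring, show 1 / D / (1 - 1 / 4) = 4 / 3 * (1 / D) by ring]

theorem cfConvergent_eq_cfLimit_of_rat (ha : ∀ n, 2 ≤ a (n + 1)) {r : ℚ} (hr : cfLimit a = r)
    {m : ℕ} (hm : 2 * r.den < qConv a (m + 2)) : cfConvergent a m = cfLimit a := by
  have hq := cast_qConv_pos fun n ↦ one_le_two.trans (ha n)
  have hden : (0 : ℝ) < r.den := by exact_mod_cast r.pos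
  have hq₀ := (hq m).ne'
  set z : ℤ := r.den * pConv a (m + 1) - r.num * qConv a (m + 1)
  have hz : (z : ℝ) = r.den * qConv a (m + 1) * (cfConvergent a m - cfLimit a) := by
    rw [hr, cfConvergent, Rat.cast_def]
    push_cast [z]
    field_simp
  have hz_lt : |(z : ℝ)| < 1 := by
    have hm' : (2 * r.den : ℝ) < qConv a (m + 2) := by exact_mod_cast hm
    calc |(z : ℝ)| = r.den * qConv a (m + 1) * |cfLimit a - cfConvergent a m| := by
          rw [hz, abs_mul, abs_of_pos (mul_pos hden (hq m)), abs_sub_comm]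
      _ ≤ r.den * qConv a (m + 1) * (2 / ((qConv a (m + 1) : ℝ) * qConv a (m + 2))) :=
          mul_le_mul_of_nonneg_left (abs_cfLimit_sub_cfConvergent_le ha m)
            (mul_pos hden (hq m)).le
      _ = 2 * r.den / qConv a (m + 2) := by field_simp
      _ < 1 := (div_lt_one (hq (m + 1))).mpr hm'
  have hz0 : z = 0 := by
    rw [← Int.cast_abs, ← Int.cast_one, Int.cast_lt, Int.abs_lt_one_iff] at hz_lt
    exact hz_lt
  rw [hz0, Int.cast_zero, eq_comm, mul_eq_zero, sub_eq_zero] at hz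
  exact hz.resolve_left (mul_pos hden (hq m)).ne'

theorem irrational_cfLimit (ha : ∀ n, 2 ≤ a (n + 1)) : Irrational (cfLimit a) := by
  rintro ⟨r, hr⟩
  obtain ⟨m, hm⟩ : ∃ m : ℕ, 2 * r.den < 2 ^ m := ⟨2 * r.den, Nat.lt_two_pow_self⟩
  have hlt : ∀ k, 2 * (r.den : ℤ) < qConv a (m + k + 2) := fun k ↦ by
    have h₁ := two_pow_le_qConv ha (m + k + 1)
    have h₂ := pow_le_pow_right₀ (one_le_two : (1 : ℤ) ≤ 2) (show m ≤ m + k + 1 by omega)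
    have h₃ : (2 * r.den : ℤ) < 2 ^ m := by exact_mod_cast hm
    linarith
  have h₁ := cfConvergent_eq_cfLimit_of_rat ha hr.symm (hlt 0)
  have h₂ := cfConvergent_eq_cfLimit_of_rat ha hr.symm (hlt 1)
  have ha₁ : ∀ n, 1 ≤ a (n + 1) := fun n ↦ one_le_two.trans (ha n)
  have := cfConvergent_succ_sub ha₁ m
  rw [h₁, h₂, sub_self] at this
  exact div_ne_zero (pow_ne_zero _ (by norm_num))
    (mul_pos (cast_qConv_pos ha₁ m) (cast_qConv_pos ha₁ (m + 1))).ne' this.symm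

theorem cfLimit_pos (ha : ∀ n, 2 ≤ a (n + 1)) (h₀ : 1 ≤ a 0) : 0 < cfLimit a := by
  have h := abs_cfLimit_sub_cfConvergent_le ha 0
  have ha₁ : (2 : ℝ) ≤ a 1 := by exact_mod_cast ha 0
  have h₀' : (1 : ℝ) ≤ a 0 := by exact_mod_cast h₀
  simp only [cfConvergent, pConv, qConv, zero_add] at h
  push_cast at h
  rw [div_one, one_mul, mul_one, add_zero] at h
  have : 2 / (a 1 : ℝ) ≤ 1 := (div_le_one (by linarith)).mpr ha₁
  have hnonneg : 0 ≤ cfLimit a := by linarith [neg_abs_le (cfLimit a - a 0)]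
  exact hnonneg.lt_of_ne (irrational_cfLimit ha).ne_zero.symm

end Convergents

section Words

theorem A0_pow (k : ℕ) : A0 ^ k = !![1, 0; (k : ℤ), 1] := by
  induction k with
  | zero => simp [Matrix.one_fin_two]
  | succ k ih => rw [pow_succ, ih, A0, Matrix.mul_fin_two]; simp

theorem A1_pow (k : ℕ) : A1 ^ k = !![1, (k : ℤ); 0, 1] := by
  induction k with
  | zero => simp [Matrix.one_fin_two]
  | succ k ih => rw [pow_succ, ih, A1, Matrix.mul_fin_two]; simp; ring

theorem wordProd_get (l : List Bool) :
    wordProd l.get = (l.map fun b ↦ if b then A1 else A0).prod := by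
  conv_rhs => rw [← List.ofFn_get l, List.map_ofFn]
  rfl

def cfWord (a : ℕ → ℕ) : ℕ → List Bool
  | 0 => List.replicate (a 0) true
  | k + 1 => cfWord a k ++ List.replicate (a (2 * k + 1)) false ++
      List.replicate (a (2 * k + 2)) true

variable (a : ℕ → ℕ)

theorem length_cfWord (k : ℕ) :
    (cfWord a k).length = ∑ i ∈ Finset.range (2 * k + 1), a i := by
  induction k with
  | zero => simp [cfWord]
  | succ k ih =>
    simp only [cfWord, List.length_append, List.length_replicate, ih]
    rw [show 2 * (k + 1) + 1 = 2 * k + 2 + 1 by ring, Finset.sum_range_succ _ (2 * k + 2),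
      Finset.sum_range_succ _ (2 * k + 1)]

theorem wordProd_cfWord (k : ℕ) :
    wordProd (cfWord a k).get =
      !![pConv (a ·) (2 * k), pConv (a ·) (2 * k + 1);
        qConv (a ·) (2 * k), qConv (a ·) (2 * k + 1)] := by
  rw [wordProd_get]
  induction k with
  | zero => simp [cfWord, A1_pow, pConv, qConv]
  | succ k ih =>
    simp only [cfWord, List.map_append, List.prod_append, ih, List.map_replicate,
      List.prod_replicate, Bool.false_eq_true, if_true, if_false, A0_pow, A1_pow,
      Matrix.mul_fin_two]
    rw [show 2 * (k + 1) + 1 = 2 * k + 1 + 2 by ring, show 2 * (k + 1) = 2 * k + 2 by ring,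
      pConv_add_two _ (2 * k + 1), qConv_add_two _ (2 * k + 1), pConv_add_two _ (2 * k),
      qConv_add_two _ (2 * k)]
    ext i j
    fin_cases i <;> fin_cases j <;> simp <;> ring

end Words

theorem rpow_le_Zpart {N : ℕ} (α β : ℝ) (σ : Fin N → Bool) :
    |((wordProd σ 0 1 : ℤ) : ℝ) - α * ((wordProd σ 1 1 : ℤ) : ℝ)| ^ (-β) ≤ Zpart N α β :=
  Finset.single_le_sum (f := fun τ : Fin N → Bool ↦
      |((wordProd τ 0 1 : ℤ) : ℝ) - α * ((wordProd τ 1 1 : ℤ) : ℝ)| ^ (-β))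
    (fun _ _ ↦ Real.rpow_nonneg (abs_nonneg _) _) (Finset.mem_univ σ)

theorem rpow_le_Zpart_cfWord (a : ℕ → ℕ) (ha : ∀ n, 2 ≤ a (n + 1)) {β : ℝ} (hβ : 0 ≤ β)
    (k : ℕ) :
    ((a (2 * k + 1) : ℝ) / 2) ^ β ≤ Zpart (cfWord a k).length (cfLimit (a ·)) β := by
  set b : ℕ → ℤ := (a ·)
  have ha' : ∀ n, 2 ≤ b (n + 1) := fun n ↦ show (2 : ℤ) ≤ a (n + 1) by exact_mod_cast ha n
  have ha₁ : ∀ n, 1 ≤ b (n + 1) := fun n ↦ one_le_two.trans (ha' n)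
  set α := cfLimit b
  set p := pConv b (2 * k + 1)
  set q := qConv b (2 * k + 1)
  have hq : (0 : ℝ) < q := cast_qConv_pos ha₁ (2 * k)
  have hterm := rpow_le_Zpart α β (cfWord a k).get
  simp only [wordProd_cfWord, Matrix.of_apply, Matrix.cons_val', Matrix.cons_val_zero,
    Matrix.cons_val_one, Matrix.cons_val_fin_one] at hterm
  have hpos : 0 < |(p : ℝ) - α * q| := abs_pos.mpr
    (((irrational_cfLimit ha').mul_intCast (qConv_pos ha₁ (2 * k)).ne').intCast_sub p).ne_zero
  have hle : |(p : ℝ) - α * q| ≤ 2 / a (2 * k + 1) := by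
    have hcoeff : (a (2 * k + 1) : ℝ) ≤ qConv b (2 * k + 2) := by
      exact_mod_cast le_qConv_add_two ha₁ (2 * k)
    have hcoeff_pos : (0 : ℝ) < a (2 * k + 1) := by
      exact_mod_cast two_pos.trans_le (ha (2 * k))
    have hconv : cfConvergent b (2 * k) = p / q := rfl
    have hpq : (p : ℝ) - α * q = q * (cfConvergent b (2 * k) - α) := by
      rw [hconv]
      field_simp
    calc |(p : ℝ) - α * q| = q * |α - cfConvergent b (2 * k)| := by
          rw [hpq, abs_mul, abs_of_pos hq, abs_sub_comm]
      _ ≤ q * (2 / (q * qConv b (2 * k + 2))) :=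
          mul_le_mul_of_nonneg_left (abs_cfLimit_sub_cfConvergent_le ha' (2 * k)) hq.le
      _ = 2 / qConv b (2 * k + 2) := by field_simp
      _ ≤ 2 / a (2 * k + 1) :=
          div_le_div_of_nonneg_left zero_le_two hcoeff_pos hcoeff
  calc ((a (2 * k + 1) : ℝ) / 2) ^ β = (2 / a (2 * k + 1)) ^ (-β) := by
        rw [← inv_div, Real.inv_rpow (by positivity), ← Real.rpow_neg (by positivity)]
    _ ≤ |(p : ℝ) - α * q| ^ (-β) := Real.rpow_le_rpow_of_nonpos hpos hle (neg_nonpos.mpr hβ)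
    _ ≤ _ := hterm

def fastSum : ℕ → ℕ
  | 0 => 1
  | m + 1 => fastSum m + 2 ^ ((m + 1) * fastSum m + 1)

def fastCoeff : ℕ → ℕ
  | 0 => 1
  | m + 1 => 2 ^ ((m + 1) * fastSum m + 1)

theorem sum_range_fastCoeff (m : ℕ) :
    ∑ i ∈ Finset.range (m + 1), fastCoeff i = fastSum m := by
  induction m with
  | zero => rfl
  | succ m ih => rw [Finset.sum_range_succ, ih, fastSum, fastCoeff]

theorem two_le_fastCoeff_succ (n : ℕ) : 2 ≤ fastCoeff (n + 1) :=
  Nat.le_self_pow (Nat.succ_ne_zero _) 2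

theorem fastSum_pos : ∀ m, 0 < fastSum m
  | 0 => one_pos
  | m + 1 => (fastSum_pos m).trans_le (Nat.le_add_right _ _)

noncomputable def fastCF : ℝ := cfLimit (fastCoeff ·)

theorem mul_log_two_le_log_Zpart_div {β : ℝ} (hβ : 0 ≤ β) (k : ℕ) :
    β * (2 * k + 1) * Real.log 2 ≤
      Real.log (Zpart (fastSum (2 * k)) fastCF β) / fastSum (2 * k) := by
  have h := rpow_le_Zpart_cfWord fastCoeff two_le_fastCoeff_succ hβ k
  rw [length_cfWord, sum_range_fastCoeff] at h
  have hcoeff : (fastCoeff (2 * k + 1) : ℝ) / 2 = 2 ^ ((2 * k + 1) * fastSum (2 * k)) := by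
    rw [fastCoeff, Nat.cast_pow, pow_succ]
    norm_num
  rw [hcoeff] at h
  have hlog := Real.log_le_log (by positivity) h
  rw [Real.log_rpow (by positivity), Real.log_pow] at hlog
  rw [fastCF, le_div_iff₀ (by exact_mod_cast fastSum_pos _)]
  push_cast at hlog
  linarith

theorem not_bddAbove_log_Zpart_div {β : ℝ} (hβ : 0 < β) :
    ¬ BddAbove (Set.range fun N : ℕ ↦ Real.log (Zpart N fastCF β) / N) := by
  rintro ⟨C, hC⟩
  have hβ₂ : 0 < β * Real.log 2 := mul_pos hβ (Real.log_pos one_lt_two)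
  obtain ⟨k, hk⟩ := exists_nat_gt (C / (β * Real.log 2))
  have hle := (mul_log_two_le_log_Zpart_div hβ.le k).trans (hC ⟨fastSum (2 * k), rfl⟩)
  rw [div_lt_iff₀ hβ₂] at hk
  nlinarith [k.cast_nonneg (α := ℝ)]

theorem stmt8 :
    ∃ α : ℝ, 0 < α ∧ Irrational α ∧ ∀ β : ℝ, 0 < β →
      ¬ BddAbove (Set.range fun N : ℕ => Real.log (Zpart N α β) / (N : ℝ)) ∧
      ∀ L : ℝ, ¬ Filter.Tendsto (fun N : ℕ => Real.log (Zpart N α β) / (N : ℝ))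
        Filter.atTop (nhds L) := by
  have ha : ∀ n, 2 ≤ (fastCoeff (n + 1) : ℤ) := fun n ↦ mod_cast two_le_fastCoeff_succ n
  refine ⟨fastCF, cfLimit_pos ha le_rfl, irrational_cfLimit ha, fun β hβ ↦ ?_⟩
  have hunbdd := not_bddAbove_log_Zpart_div hβ
  exact ⟨hunbdd, fun L hL ↦ hunbdd hL.bddAbove_range⟩
end

section
/- Let α > 0 be a real number for which there exist a constant C > 0 and a real number d ≥ 2 such that C/q^d ≤ |p − α·q| for all coprime integers p and positive integers q. Then for every real number k > 1 and every real number β > 2, lim_{N→∞} (log Z_N(α;β))/N^k = 0; in particular α has a k-free energy limit equal to zero for every k > 1. -/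
/-!
Every product `A_{σ₁}⋯A_{σ_N}` is a nonnegative integer matrix of determinant one with entries
at most `2^N`, so `p_σ/q_σ` is a reduced fraction with `1 ≤ q_σ ≤ 2^N`. The Diophantine condition
then gives `|p_σ - α q_σ| ≥ C 2^{-dN}`, while trivially `|p_σ - α q_σ| ≤ (1 + |α|) 2^N`. Summing
over the `2^N` words, `log Z_N(α;β)` is squeezed between two affine functions of `N`, which are
`o(N^k)` for `k > 1`.
-/

open Filter Topology

lemma wordProd_cons {N : ℕ} (σ : Fin (N + 1) → Bool) :
    wordProd σ = (if σ 0 then A1 else A0) * wordProd (fun i => σ i.succ) := by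
  rw [wordProd, List.ofFn_succ, List.prod_cons, wordProd]

lemma det_wordProd {N : ℕ} (σ : Fin N → Bool) : (wordProd σ).det = 1 := by
  induction N with
  | zero => simp [wordProd]
  | succ n ih =>
    rw [wordProd_cons, Matrix.det_mul, ih]
    split <;> simp [A0, A1, Matrix.det_fin_two]

lemma wordProd_mem_Icc {N : ℕ} (σ : Fin N → Bool) (i j : Fin 2) :
    wordProd σ i j ∈ Set.Icc 0 (2 ^ N) := by
  induction N generalizing i j with
  | zero => fin_cases i <;> fin_cases j <;> simp [wordProd]
  | succ n ih =>
    obtain ⟨h0, h0'⟩ := ih (fun i => σ i.succ) 0 j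
    obtain ⟨h1, h1'⟩ := ih (fun i => σ i.succ) 1 j
    rw [wordProd_cons]
    constructor <;> split <;> fin_cases i <;>
      simp [A0, A1, Matrix.mul_apply, Fin.sum_univ_two, pow_succ] <;> omega

lemma wordProd_one_one_pos {N : ℕ} (σ : Fin N → Bool) : 0 < wordProd σ 1 1 := by
  have hdet := det_wordProd σ
  rw [Matrix.det_fin_two] at hdet
  have h00 := (wordProd_mem_Icc σ 0 0).1
  have h01 := (wordProd_mem_Icc σ 0 1).1
  have h10 := (wordProd_mem_Icc σ 1 0).1
  have h11 := (wordProd_mem_Icc σ 1 1).1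
  nlinarith [mul_nonneg h01 h10]

lemma isCoprime_wordProd {N : ℕ} (σ : Fin N → Bool) :
    IsCoprime (wordProd σ 0 1) (wordProd σ 1 1) := by
  have hdet := det_wordProd σ
  rw [Matrix.det_fin_two] at hdet
  exact ⟨-wordProd σ 1 0, wordProd σ 0 0, by linear_combination hdet⟩

noncomputable def wordGap (α : ℝ) {N : ℕ} (σ : Fin N → Bool) : ℝ :=
  |((wordProd σ 0 1 : ℤ) : ℝ) - α * ((wordProd σ 1 1 : ℤ) : ℝ)|

lemma wordGap_le (α : ℝ) {N : ℕ} (σ : Fin N → Bool) :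
    wordGap α σ ≤ (1 + |α|) * 2 ^ N := by
  have hp := wordProd_mem_Icc σ 0 1
  have hq := wordProd_mem_Icc σ 1 1
  have hp' : |((wordProd σ 0 1 : ℤ) : ℝ)| ≤ 2 ^ N := by
    rw [abs_of_nonneg (by exact_mod_cast hp.1)]; exact_mod_cast hp.2
  have hq' : |((wordProd σ 1 1 : ℤ) : ℝ)| ≤ 2 ^ N := by
    rw [abs_of_nonneg (by exact_mod_cast hq.1)]; exact_mod_cast hq.2
  calc wordGap α σ
      ≤ |((wordProd σ 0 1 : ℤ) : ℝ)| + |α| * |((wordProd σ 1 1 : ℤ) : ℝ)| := by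
        rw [wordGap, ← abs_mul]; exact abs_sub _ _
    _ ≤ 2 ^ N + |α| * 2 ^ N := by gcongr
    _ = (1 + |α|) * 2 ^ N := by ring

def DiophantineBound (α C d : ℝ) : Prop :=
  ∀ p q : ℤ, 0 < q → IsCoprime p q → C / (q : ℝ) ^ d ≤ |(p : ℝ) - α * (q : ℝ)|

lemma DiophantineBound.div_rpow_le_wordGap {α C d : ℝ} (h : DiophantineBound α C d)
    (hC : 0 ≤ C) (hd : 0 ≤ d) {N : ℕ} (σ : Fin N → Bool) :
    C / ((2 : ℝ) ^ N) ^ d ≤ wordGap α σ := by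
  refine le_trans ?_ (h _ _ (wordProd_one_one_pos σ) (isCoprime_wordProd σ))
  have hq : (0 : ℝ) < (wordProd σ 1 1 : ℤ) := by exact_mod_cast wordProd_one_one_pos σ
  have hq' : ((wordProd σ 1 1 : ℤ) : ℝ) ≤ 2 ^ N := by exact_mod_cast (wordProd_mem_Icc σ 1 1).2
  gcongr

lemma rpow_neg_le_Zpart {α β : ℝ} {N : ℕ} (hgap : ∀ σ : Fin N → Bool, 0 < wordGap α σ)
    (hβ : 0 ≤ β) : ((1 + |α|) * 2 ^ N) ^ (-β) ≤ Zpart N α β := by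
  let σ₀ : Fin N → Bool := fun _ => false
  calc ((1 + |α|) * 2 ^ N) ^ (-β)
      ≤ wordGap α σ₀ ^ (-β) :=
        Real.rpow_le_rpow_of_nonpos (hgap σ₀) (wordGap_le α σ₀) (neg_nonpos.2 hβ)
    _ ≤ Zpart N α β :=
        Finset.single_le_sum (f := fun σ => wordGap α σ ^ (-β))
          (fun σ _ => Real.rpow_nonneg (abs_nonneg _) _) (Finset.mem_univ σ₀)

lemma DiophantineBound.Zpart_le {α C d β : ℝ} (h : DiophantineBound α C d) (hC : 0 < C)
    (hd : 0 ≤ d) (hβ : 0 ≤ β) (N : ℕ) :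
    Zpart N α β ≤ 2 ^ N * (C / ((2 : ℝ) ^ N) ^ d) ^ (-β) := by
  have hlow : 0 < C / ((2 : ℝ) ^ N) ^ d := by positivity
  calc Zpart N α β
      ≤ ∑ _σ : Fin N → Bool, (C / ((2 : ℝ) ^ N) ^ d) ^ (-β) :=
        Finset.sum_le_sum fun σ _ => Real.rpow_le_rpow_of_nonpos hlow
          (h.div_rpow_le_wordGap hC.le hd σ) (neg_nonpos.2 hβ)
    _ = 2 ^ N * (C / ((2 : ℝ) ^ N) ^ d) ^ (-β) := by simp

lemma DiophantineBound.log_Zpart_mem_Icc {α C d β : ℝ} (h : DiophantineBound α C d)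
    (hC : 0 < C) (hd : 0 ≤ d) (hβ : 0 ≤ β) (N : ℕ) :
    Real.log (Zpart N α β) ∈ Set.Icc (-β * Real.log 2 * N - β * Real.log (1 + |α|))
      ((1 + β * d) * Real.log 2 * N - β * Real.log C) := by
  have hgap σ := (by positivity : (0 : ℝ) < C / (2 ^ N) ^ d).trans_le
    (h.div_rpow_le_wordGap hC.le hd (N := N) σ)
  have hlow := rpow_neg_le_Zpart hgap hβ
  have hlow_pos : 0 < ((1 + |α|) * 2 ^ N) ^ (-β) := by positivity
  constructor
  · calc -β * Real.log 2 * N - β * Real.log (1 + |α|)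
        = Real.log (((1 + |α|) * 2 ^ N) ^ (-β)) := by
          rw [Real.log_rpow (by positivity), Real.log_mul (by positivity) (by positivity),
            Real.log_pow]
          ring
      _ ≤ Real.log (Zpart N α β) := Real.log_le_log hlow_pos hlow
  · calc Real.log (Zpart N α β)
        ≤ Real.log (2 ^ N * (C / ((2 : ℝ) ^ N) ^ d) ^ (-β)) :=
          Real.log_le_log (hlow_pos.trans_le hlow) (h.Zpart_le hC hd hβ N)
      _ = (1 + β * d) * Real.log 2 * N - β * Real.log C := by
          rw [Real.log_mul (by positivity) (by positivity), Real.log_rpow (by positivity),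
            Real.log_div hC.ne' (by positivity), Real.log_rpow (by positivity), Real.log_pow]
          ring

lemma tendsto_affine_div_rpow (a b : ℝ) {k : ℝ} (hk : 1 < k) :
    Tendsto (fun N : ℕ => (a * N + b) / (N : ℝ) ^ k) atTop (𝓝 0) := by
  have hpow {e : ℝ} (he : 0 < e) : Tendsto (fun N : ℕ => (N : ℝ) ^ (-e)) atTop (𝓝 0) :=
    (tendsto_rpow_neg_atTop he).comp tendsto_natCast_atTop_atTop
  have hsum := ((hpow (sub_pos.2 hk)).const_mul a).add ((hpow (by linarith)).const_mul b)
  rw [mul_zero, mul_zero, add_zero] at hsum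
  refine hsum.congr' ?_
  filter_upwards [eventually_gt_atTop 0] with N hN
  have hN : (0 : ℝ) < N := by exact_mod_cast hN
  rw [neg_sub, Real.rpow_sub hN, Real.rpow_neg hN.le, Real.rpow_one]
  field_simp

lemma tendsto_div_rpow_of_affine_bounds {f : ℕ → ℝ} {a b a' b' k : ℝ} (hk : 1 < k)
    (hf : ∀ N : ℕ, f N ∈ Set.Icc (a * N + b) (a' * N + b')) :
    Tendsto (fun N : ℕ => f N / (N : ℝ) ^ k) atTop (𝓝 0) :=
  tendsto_of_tendsto_of_tendsto_of_le_of_le (tendsto_affine_div_rpow a b hk)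
    (tendsto_affine_div_rpow a' b' hk)
    (fun N => div_le_div_of_nonneg_right (hf N).1 (by positivity))
    (fun N => div_le_div_of_nonneg_right (hf N).2 (by positivity))

theorem stmt9_general (α : ℝ) (C d : ℝ) (hC : 0 < C) (hd : 2 ≤ d)
    (hdioph : ∀ p q : ℤ, 0 < q → IsCoprime p q →
      C / (q : ℝ) ^ d ≤ |(p : ℝ) - α * (q : ℝ)|)
    (k β : ℝ) (hk : 1 < k) (hβ : 2 < β) :
    Filter.Tendsto (fun N : ℕ => Real.log (Zpart N α β) / (N : ℝ) ^ k)
      Filter.atTop (nhds 0) := by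
  exact tendsto_div_rpow_of_affine_bounds hk
    (DiophantineBound.log_Zpart_mem_Icc hdioph hC (by linarith) (by linarith))

theorem stmt9 (α : ℝ) (hα : 0 < α) (C d : ℝ) (hC : 0 < C) (hd : 2 ≤ d)
    (hdioph : ∀ p q : ℤ, 0 < q → IsCoprime p q →
      C / (q : ℝ) ^ d ≤ |(p : ℝ) - α * (q : ℝ)|)
    (k β : ℝ) (hk : 1 < k) (hβ : 2 < β) :
    Filter.Tendsto (fun N : ℕ => Real.log (Zpart N α β) / (N : ℝ) ^ k)
      Filter.atTop (nhds 0) :=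
  stmt9_general α C d hC hd hdioph k β hk hβ
end

section
/- Let α > 0 be an irrational real algebraic number. Then for every real number k > 1 and every real number β > 2, lim_{N→∞} (log Z_N(α;β))/N^k = 0; that is, every positive real algebraic number of degree at least two has k-free energy limit equal to zero for every k > 1. -/
/-!
Every word satisfies `0 ≤ p_σ ≤ 2^N` and `1 ≤ q_σ ≤ 2^N`, so `|p_σ - α q_σ| ≤ 2^N (1 + |α|)`,
while Liouville's inequality for the algebraic irrational `α` gives
`|p_σ - α q_σ| ≥ (C q_σ^d)⁻¹ ≥ (C 2^{dN})⁻¹`. Hence each of the `2^N` terms of `Z_N(α;β)` has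
logarithm `O(N)`, so `log Z_N(α;β) = O(N) = o(N^k)` for every `k > 1` and every `β`.
-/

open Filter Topology Real

section ListProd

variable {ι : Type*} [Fintype ι] [DecidableEq ι]

lemma list_prod_apply_mem_Icc (l : List (Matrix ι ι ℤ))
    (hl : ∀ A ∈ l, ∀ i j, A i j ∈ Set.Icc 0 1) (i j : ι) :
    l.prod i j ∈ Set.Icc 0 ((Fintype.card ι : ℤ) ^ l.length) := by
  induction l generalizing i with
  | nil =>
    rw [List.prod_nil, Matrix.one_apply]
    split_ifs <;> simp
  | cons A l ih =>
    have ih := fun r => ih (fun B hB => hl B (List.mem_cons_of_mem _ hB)) r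
    have hA := hl A List.mem_cons_self i
    rw [List.prod_cons, Matrix.mul_apply, List.length_cons, pow_succ']
    constructor
    · exact Finset.sum_nonneg fun r _ => mul_nonneg (hA r).1 (ih r).1
    · calc ∑ r, A i r * l.prod r j ≤ ∑ _r : ι, (Fintype.card ι : ℤ) ^ l.length :=
            Finset.sum_le_sum fun r _ =>
              (mul_le_of_le_one_left (ih r).1 (hA r).2).trans (ih r).2
        _ = _ := by simp

lemma one_le_list_prod_apply_self (l : List (Matrix ι ι ℤ))
    (hl : ∀ A ∈ l, ∀ i j, A i j ∈ Set.Icc 0 1) (hdiag : ∀ A ∈ l, ∀ i, A i i = 1) (i : ι) :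
    1 ≤ l.prod i i := by
  induction l with
  | nil => simp
  | cons A l ih =>
    have ih := ih (fun B hB => hl B (List.mem_cons_of_mem _ hB))
      (fun B hB => hdiag B (List.mem_cons_of_mem _ hB))
    rw [List.prod_cons, Matrix.mul_apply, ← Finset.add_sum_erase _ _ (Finset.mem_univ i),
      hdiag A List.mem_cons_self i, one_mul]
    refine le_add_of_le_of_nonneg ih (Finset.sum_nonneg fun r _ => mul_nonneg ?_ ?_)
    · exact (hl A List.mem_cons_self i r).1
    · exact (list_prod_apply_mem_Icc l (fun B hB => hl B (List.mem_cons_of_mem _ hB)) r i).1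

end ListProd

section Farey

variable {N : ℕ} (σ : Fin N → Bool)

lemma forall_mem_ofFn_farey {P : Matrix (Fin 2) (Fin 2) ℤ → Prop} (h0 : P A0) (h1 : P A1) :
    ∀ A ∈ List.ofFn (fun i => if σ i then A1 else A0), P A := by
  intro A hA
  obtain ⟨i, rfl⟩ := List.mem_ofFn.mp hA
  split <;> assumption

lemma forall_mem_ofFn_farey_apply_mem_Icc :
    ∀ A ∈ List.ofFn (fun i => if σ i then A1 else A0), ∀ i j, A i j ∈ Set.Icc 0 1 :=
  forall_mem_ofFn_farey σ (by simp [Fin.forall_fin_two, A0]) (by simp [Fin.forall_fin_two, A1])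

lemma wordProd_apply_mem_Icc (i j : Fin 2) : wordProd σ i j ∈ Set.Icc 0 (2 ^ N) := by
  simpa [wordProd] using list_prod_apply_mem_Icc _ (forall_mem_ofFn_farey_apply_mem_Icc σ) i j

lemma one_le_wordProd_one_one : 1 ≤ wordProd σ 1 1 :=
  one_le_list_prod_apply_self _ (forall_mem_ofFn_farey_apply_mem_Icc σ)
    (forall_mem_ofFn_farey σ (by simp [Fin.forall_fin_two, A0])
      (by simp [Fin.forall_fin_two, A1])) 1

end Farey

lemma Irrational.exists_inv_le_abs_sub_mul_of_isAlgebraic {α : ℝ} (hirr : Irrational α)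
    (halg : IsAlgebraic ℚ α) :
    ∃ C > 0, ∃ d : ℕ, ∀ p q : ℤ, 0 < q → (C * (q : ℝ) ^ d)⁻¹ ≤ |p - α * q| := by
  obtain ⟨f, f0, hf⟩ := (IsFractionRing.isAlgebraic_iff ℤ ℚ ℝ).mpr halg
  obtain ⟨C, hC, hC_le⟩ := Liouville.exists_pos_real_of_irrational_root hirr f0
    (by rwa [Polynomial.eval_map, ← Polynomial.aeval_def])
  refine ⟨C, hC, f.natDegree, fun p q hq => ?_⟩
  lift q to ℕ using hq.le
  obtain ⟨b, rfl⟩ := Nat.exists_eq_succ_of_ne_zero (by omega : q ≠ 0)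
  push_cast
  have hb : (0 : ℝ) < b + 1 := by positivity
  calc (C * (b + 1) ^ f.natDegree)⁻¹ ≤ |α - p / (b + 1)| := by
        rw [inv_le_iff_one_le_mul₀ (by positivity)]
        exact (hC_le p b).trans_eq (by ring)
    _ ≤ (b + 1) * |α - p / (b + 1)| := le_mul_of_one_le_left (abs_nonneg _) (by linarith)
    _ = |p - α * (b + 1)| := by
        rw [abs_sub_comm, show (p : ℝ) - α * (b + 1) = (b + 1) * (p / (b + 1) - α) by
          field_simp, abs_mul, abs_of_pos hb]

def wordDefect (α : ℝ) {N : ℕ} (σ : Fin N → Bool) : ℝ :=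
  (wordProd σ 0 1 : ℝ) - α * (wordProd σ 1 1 : ℝ)

lemma abs_wordDefect_le (α : ℝ) {N : ℕ} (σ : Fin N → Bool) :
    |wordDefect α σ| ≤ 2 ^ N * (1 + |α|) := by
  obtain ⟨hp0, hp⟩ := wordProd_apply_mem_Icc σ 0 1
  obtain ⟨hq0, hq⟩ := wordProd_apply_mem_Icc σ 1 1
  have hp0' : (0 : ℝ) ≤ wordProd σ 0 1 := by exact_mod_cast hp0
  have hq0' : (0 : ℝ) ≤ wordProd σ 1 1 := by exact_mod_cast hq0
  have hp' : (wordProd σ 0 1 : ℝ) ≤ 2 ^ N := by exact_mod_cast hp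
  have hq' : (wordProd σ 1 1 : ℝ) ≤ 2 ^ N := by exact_mod_cast hq
  calc |wordDefect α σ| ≤ |(wordProd σ 0 1 : ℝ)| + |α| * |(wordProd σ 1 1 : ℝ)| := by
        rw [wordDefect, ← abs_mul]; exact abs_sub _ _
    _ ≤ 2 ^ N * (1 + |α|) := by
        rw [abs_of_nonneg hp0', abs_of_nonneg hq0']
        nlinarith [abs_nonneg α]

lemma exists_abs_log_abs_wordDefect_le {α : ℝ} (hirr : Irrational α) (halg : IsAlgebraic ℚ α) :
    ∃ a b : ℝ, ∀ (N : ℕ) (σ : Fin N → Bool),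
      0 < |wordDefect α σ| ∧ |log (|wordDefect α σ|)| ≤ a * N + b := by
  obtain ⟨C, hC, d, hC_le⟩ := hirr.exists_inv_le_abs_sub_mul_of_isAlgebraic halg
  refine ⟨(d + 1) * log 2, |log C| + log (1 + |α|), fun N σ => ?_⟩
  have hq := one_le_wordProd_one_one σ
  have hq2 : (wordProd σ 1 1 : ℝ) ≤ 2 ^ N := by exact_mod_cast (wordProd_apply_mem_Icc σ 1 1).2
  have hlow : (C * (2 ^ N) ^ d)⁻¹ ≤ |wordDefect α σ| := by
    refine le_trans ?_ (hC_le _ _ hq)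
    gcongr
  have hpos : 0 < |wordDefect α σ| := lt_of_lt_of_le (by positivity) hlow
  have hlog2 : 0 ≤ log 2 := log_nonneg one_le_two
  have hlogα : 0 ≤ log (1 + |α|) := log_nonneg (by linarith [abs_nonneg α])
  have hN : (0 : ℝ) ≤ N := N.cast_nonneg
  refine ⟨hpos, abs_le.mpr ⟨?_, ?_⟩⟩
  · have := log_le_log (by positivity) hlow
    rw [log_inv, log_mul hC.ne' (by positivity), ← pow_mul, log_pow, Nat.cast_mul] at this
    nlinarith [le_abs_self (log C), mul_nonneg hN hlog2]
  · have := log_le_log hpos (abs_wordDefect_le α σ)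
    rw [log_mul (by positivity) (by positivity), log_pow] at this
    nlinarith [abs_nonneg (log C), mul_nonneg (mul_nonneg hN hlog2) d.cast_nonneg]

lemma abs_log_sum_le {ι : Type*} [Fintype ι] [Nonempty ι] {t : ι → ℝ} {L : ℝ}
    (ht : ∀ i, 0 < t i) (htL : ∀ i, |log (t i)| ≤ L) :
    |log (∑ i, t i)| ≤ log (Fintype.card ι) + L := by
  have hcard : (0 : ℝ) < Fintype.card ι := by exact_mod_cast Fintype.card_pos
  have hle : ∀ i, t i ≤ exp L := fun i =>
    (log_le_iff_le_exp (ht i)).mp ((le_abs_self _).trans (htL i))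
  obtain ⟨i₀⟩ := ‹Nonempty ι›
  have hsum_pos : 0 < ∑ i, t i := Finset.sum_pos (fun i _ => ht i) ⟨i₀, Finset.mem_univ _⟩
  refine abs_le.mpr ⟨?_, ?_⟩
  · calc -(log (Fintype.card ι) + L) ≤ log (t i₀) := by
          have hlog_card : 0 ≤ log (Fintype.card ι) :=
            log_nonneg (Nat.one_le_cast.mpr (Fintype.card_pos (α := ι)))
          linarith [neg_abs_le (log (t i₀)), htL i₀]
      _ ≤ log (∑ i, t i) :=
          log_le_log (ht i₀) (Finset.single_le_sum (fun i _ => (ht i).le) (Finset.mem_univ i₀))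
  · calc log (∑ i, t i) ≤ log (Fintype.card ι * exp L) := by
          refine log_le_log hsum_pos ?_
          simpa using Finset.sum_le_sum fun i (_ : i ∈ Finset.univ) => hle i
      _ = log (Fintype.card ι) + L := by rw [log_mul hcard.ne' (exp_pos L).ne', log_exp]

lemma tendsto_div_rpow_of_abs_le_linear {f : ℕ → ℝ} {a b k : ℝ} (hk : 1 < k)
    (hf : ∀ N, |f N| ≤ a * N + b) :
    Tendsto (fun N : ℕ => f N / (N : ℝ) ^ k) atTop (𝓝 0) := by
  have hlim : Tendsto (fun N : ℕ => (|a| + |b|) * (N : ℝ) ^ (-(k - 1))) atTop (𝓝 0) := by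
    simpa only [mul_zero, Function.comp_def] using ((tendsto_rpow_neg_atTop (by linarith)).comp
      tendsto_natCast_atTop_atTop).const_mul (|a| + |b|)
  refine squeeze_zero_norm' ?_ hlim
  filter_upwards [eventually_ge_atTop 1] with N hN
  have hN1 : (1 : ℝ) ≤ N := by exact_mod_cast hN
  have hN0 : (0 : ℝ) < N := by linarith
  rw [norm_div, Real.norm_eq_abs, Real.norm_of_nonneg (rpow_nonneg hN0.le k),
    rpow_neg hN0.le, rpow_sub_one hN0.ne', inv_div, mul_div_assoc']
  gcongr
  calc |f N| ≤ a * N + b := hf N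
    _ ≤ (|a| + |b|) * N := by nlinarith [le_abs_self a, le_abs_self b, abs_nonneg b]

theorem stmt10_general (α : ℝ) (hirr : Irrational α)
    (halg : IsAlgebraic ℚ α) (k β : ℝ) (hk : 1 < k) :
    Filter.Tendsto (fun N : ℕ => Real.log (Zpart N α β) / (N : ℝ) ^ k)
      Filter.atTop (nhds 0) := by
  obtain ⟨a, b, hdefect⟩ := exists_abs_log_abs_wordDefect_le hirr halg
  refine tendsto_div_rpow_of_abs_le_linear (a := log 2 + |β| * a) (b := |β| * b) hk fun N => ?_
  have hterm (σ : Fin N → Bool) : |log (|wordDefect α σ| ^ (-β))| ≤ |β| * (a * N + b) := by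
    rw [log_rpow (hdefect N σ).1, abs_mul, abs_neg]
    exact mul_le_mul_of_nonneg_left (hdefect N σ).2 (abs_nonneg β)
  change |log (∑ σ, |wordDefect α σ| ^ (-β))| ≤ _
  calc _ ≤ log (Fintype.card (Fin N → Bool)) + |β| * (a * N + b) :=
        abs_log_sum_le (fun σ => rpow_pos_of_pos (hdefect N σ).1 _) hterm
    _ = (log 2 + |β| * a) * N + |β| * b := by
        rw [Fintype.card_fun, Fintype.card_bool, Fintype.card_fin, Nat.cast_pow, log_pow]
        push_cast
        ring

theorem stmt10 (α : ℝ) (hα : 0 < α) (hirr : Irrational α)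
    (halg : IsAlgebraic ℚ α) (k β : ℝ) (hk : 1 < k) (hβ : 2 < β) :
    Filter.Tendsto (fun N : ℕ => Real.log (Zpart N α β) / (N : ℝ) ^ k)
      Filter.atTop (nhds 0) :=
  stmt10_general α hirr halg k β hk
end
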